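/- arXiv:math-ph/0101013 — 8 statements merged into one kernel-verified Lean document; each statement's English description precedes it below -/
import Mathlib

section
/- Let 0 < q < 1 and let A(ω) = a₁ω + a₀, B(ω) = b₂ω² + b₁ω + b₀ be real polynomials. Suppose ϱ : ℝ → ℝ satisfies the q-Pearson equation in the functional form ϱ(ω)(B(ω) − (1−q)ω·A(ω)) = B(qω)·ϱ(qω) for all ω ∈ ℝ. For k ∈ ℕ define ϱ⁽ᵏ⁾(ω) := ϱ(qᵏω)·∏_{j=1}^{k} B(qʲω) and the degree ≤ 1 polynomial A⁽ᵏ⁾(ω) := qᵏ·A(qᵏω) + ∑_{j=0}^{k−1} qʲ·(b₂(1+q)qʲω + b₁). Then ϱ⁽ᵏ⁾ satisfies the q-Pearson equation for the pair (A⁽ᵏ⁾, B), i.e. ϱ⁽ᵏ⁾(ω)(B(ω) − (1−q)ω·A⁽ᵏ⁾(ω)) = B(qω)·ϱ⁽ᵏ⁾(qω) for all ω ∈ ℝ. -/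
/-!
The q-Leibniz rule `∂_q(f·g)(ω) = f(qω)·(∂_q g)(ω) + (∂_q f)(ω)·g(ω)` shows that if `ϱ` solves the
q-Pearson equation for `(A, B)`, then `ω ↦ ϱ(qω)·B(qω)` solves it for
`(ω ↦ q·A(qω) + (∂_q B)(ω), B)`. Iterating this step `k` times gives `ϱ⁽ᵏ⁾` and `A⁽ᵏ⁾`.
-/

open Finset

def QPearson (q : ℝ) (A B ϱ : ℝ → ℝ) : Prop :=
  ∀ ω, ϱ ω * (B ω - (1 - q) * ω * A ω) = B (q * ω) * ϱ (q * ω)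

namespace QPearson

variable {q : ℝ} {A B D ϱ : ℝ → ℝ}

theorem congr {A' ϱ' : ℝ → ℝ} (h : QPearson q A B ϱ) (hA : ∀ ω, A' ω = A ω)
    (hϱ : ∀ ω, ϱ' ω = ϱ ω) : QPearson q A' B ϱ' := by
  intro ω
  rw [hA, hϱ, hϱ]
  exact h ω

/-- Here `D` plays the role of `∂_q B`, stated without division so that it also covers `ω = 0`. -/
theorem comp_mul_mul (h : QPearson q A B ϱ)
    (hD : ∀ ω, B ω - B (q * ω) = (1 - q) * ω * D ω) :
    QPearson q (fun ω => q * A (q * ω) + D ω) B (fun ω => ϱ (q * ω) * B (q * ω)) := by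
  intro ω
  have hshift : B ω - (1 - q) * ω * (q * A (q * ω) + D ω) =
      B (q * ω) - (1 - q) * (q * ω) * A (q * ω) := by
    linear_combination hD ω
  calc ϱ (q * ω) * B (q * ω) * (B ω - (1 - q) * ω * (q * A (q * ω) + D ω))
      = B (q * ω) * (ϱ (q * ω) * (B (q * ω) - (1 - q) * (q * ω) * A (q * ω))) := by
        rw [hshift]; ring
    _ = B (q * ω) * (ϱ (q * (q * ω)) * B (q * (q * ω))) := by
        rw [h (q * ω)]; ring

theorem iterate (h : QPearson q A B ϱ) (hD : ∀ ω, B ω - B (q * ω) = (1 - q) * ω * D ω)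
    (k : ℕ) :
    QPearson q (fun ω => q ^ k * A (q ^ k * ω) + ∑ j ∈ range k, q ^ j * D (q ^ j * ω)) B
      (fun ω => ϱ (q ^ k * ω) * ∏ j ∈ Icc 1 k, B (q ^ j * ω)) := by
  induction k generalizing A ϱ with
  | zero => simpa [QPearson] using h
  | succ k ih =>
    refine (ih (h.comp_mul_mul hD)).congr (fun ω => ?_) (fun ω => ?_)
    · rw [sum_range_succ, pow_succ, show q * (q ^ k * ω) = q ^ k * q * ω by ring]
      ring
    · rw [prod_Icc_succ_top (Nat.le_add_left 1 k), pow_succ,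
        show q * (q ^ k * ω) = q ^ k * q * ω by ring]
      ring

end QPearson

theorem stmt_0_general (q b₀ b₁ b₂ : ℝ)
    (A B ϱ : ℝ → ℝ)
    (hB : ∀ ω : ℝ, B ω = b₂ * ω ^ 2 + b₁ * ω + b₀)
    (hPearson : ∀ ω : ℝ, ϱ ω * (B ω - (1 - q) * ω * A ω) = B (q * ω) * ϱ (q * ω))
    (k : ℕ) (ϱk Ak : ℝ → ℝ)
    (hϱk : ∀ ω : ℝ, ϱk ω = ϱ (q ^ k * ω) * ∏ j ∈ Finset.Icc 1 k, B (q ^ j * ω))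
    (hAk : ∀ ω : ℝ, Ak ω =
      q ^ k * A (q ^ k * ω) + ∑ j ∈ Finset.range k, q ^ j * (b₂ * (1 + q) * q ^ j * ω + b₁)) :
    ∀ ω : ℝ, ϱk ω * (B ω - (1 - q) * ω * Ak ω) = B (q * ω) * ϱk (q * ω) := by
  have hqDeriv : ∀ ω, B ω - B (q * ω) = (1 - q) * ω * (b₂ * (1 + q) * ω + b₁) := fun ω => by
    rw [hB, hB]; ring
  refine ((QPearson.iterate hPearson hqDeriv k).congr (fun ω => ?_) hϱk : QPearson q Ak B ϱk)
  simp only [hAk, mul_assoc]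

/-- Let `0 < q < 1` and let `A(ω) = a₁ω + a₀`, `B(ω) = b₂ω² + b₁ω + b₀`
be real polynomials.  Suppose `ϱ : ℝ → ℝ` satisfies the q-Pearson equation in the
functional form `ϱ(ω)(B(ω) − (1−q)ω·A(ω)) = B(qω)·ϱ(qω)` for all `ω`.
For `k ∈ ℕ` define `ϱ⁽ᵏ⁾(ω) := ϱ(qᵏω)·∏_{j=1}^{k} B(qʲω)` and the degree `≤ 1` polynomial
`A⁽ᵏ⁾(ω) := qᵏ·A(qᵏω) + ∑_{j=0}^{k−1} qʲ·(b₂(1+q)qʲω + b₁)`.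
Then `ϱ⁽ᵏ⁾` satisfies the q-Pearson equation for the pair `(A⁽ᵏ⁾, B)`. -/
theorem stmt_0 (q a₀ a₁ b₀ b₁ b₂ : ℝ) (hq0 : 0 < q) (hq1 : q < 1)
    (A B ϱ : ℝ → ℝ)
    (hA : ∀ ω : ℝ, A ω = a₁ * ω + a₀)
    (hB : ∀ ω : ℝ, B ω = b₂ * ω ^ 2 + b₁ * ω + b₀)
    (hPearson : ∀ ω : ℝ, ϱ ω * (B ω - (1 - q) * ω * A ω) = B (q * ω) * ϱ (q * ω))
    (k : ℕ) (ϱk Ak : ℝ → ℝ)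
    (hϱk : ∀ ω : ℝ, ϱk ω = ϱ (q ^ k * ω) * ∏ j ∈ Finset.Icc 1 k, B (q ^ j * ω))
    (hAk : ∀ ω : ℝ, Ak ω =
      q ^ k * A (q ^ k * ω) + ∑ j ∈ Finset.range k, q ^ j * (b₂ * (1 + q) * q ^ j * ω + b₁)) :
    ∀ ω : ℝ, ϱk ω * (B ω - (1 - q) * ω * Ak ω) = B (q * ω) * ϱk (q * ω) :=
  stmt_0_general q b₀ b₁ b₂ A B ϱ hB hPearson k ϱk Ak hϱk hAk
end

section
/- Let 0 < q < 1, let A(ω) = a₁ω + a₀, B(ω) = b₂ω² + b₁ω + b₀ be real polynomials, let a ≤ 0 ≤ b, and let ϱ : ℝ → ℝ be continuous at 0, satisfy the q-Pearson equation ∂_q(ϱ·B)(ω) = ϱ(ω)A(ω) for all ω ≠ 0, and satisfy the boundary conditions ϱ(a)B(a) = ϱ(b)B(b) = 0. Let (P̃_n)_{n≥0} be monic real polynomials with deg P̃_n = n such that ∫_a^b P̃_n(ω) ωʲ ϱ(ω) d_qω = 0 for all 0 ≤ j ≤ n−1 (all Jackson integrals involved being absolutely convergent). Then for every n ≥ 1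 the polynomial (1/[n])·∂_q P̃_n is monic of degree n−1, where [n] = (1−qⁿ)/(1−q), and ∫_a^b (∂_q P̃_n)(ω) ωʲ ϱ⁽¹⁾(ω) d_qω = 0 for all 0 ≤ j ≤ n−2, where ϱ⁽¹⁾(ω) := ϱ(qω)B(qω). -/
/-!
Moving `∂_q` from `P̃_n` onto `ωʲ ϱ(ω) B(ω)` by q-integration by parts costs no boundary term,
since `ϱ B` vanishes at `a` and `b` (the telescoping Jackson sums meet at `0`, where continuity of
`ϱ` is used). By the Pearson equation `∂_q(ϱ B ωʲ) = ϱ · (qʲωʲA + [j]ωʲ⁻¹B)`, a polynomial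
of degree at most `j + 1 < n` times `ϱ`, so the integral vanishes by orthogonality of `P̃_n`.
Monicity is the leading-coefficient computation `∂_q ωⁿ = [n] ωⁿ⁻¹`.
-/

/-- The q-derivative of a function: `(∂_q f)(ω) = (f(ω) − f(qω))/((1−q)ω)` (junk at `ω = 0`). -/
noncomputable def qD (q : ℝ) (f : ℝ → ℝ) (ω : ℝ) : ℝ :=
  (f ω - f (q * ω)) / ((1 - q) * ω)

/-- The q-derivative of a real polynomial: `a·Xⁿ ↦ a·[n]·Xⁿ⁻¹` where `[n] = 1 + q + ⋯ + qⁿ⁻¹`,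
so that for `ω ≠ 0` its value at `ω` is `(p(ω) − p(qω))/((1−q)ω)`. -/
noncomputable def qDerivP (q : ℝ) (p : Polynomial ℝ) : Polynomial ℝ :=
  p.sum fun n a => Polynomial.C (a * ∑ i ∈ Finset.range n, q ^ i) * Polynomial.X ^ (n - 1)

/-- The Jackson integral `∫_a^b f(ω) d_qω = (1−q)·∑_{k=0}^∞ qᵏ(b·f(qᵏb) − a·f(qᵏa))`. -/
noncomputable def jackson (q a b : ℝ) (f : ℝ → ℝ) : ℝ :=
  (1 - q) * ∑' k : ℕ, q ^ k * (b * f (q ^ k * b) - a * f (q ^ k * a))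

/-- Absolute convergence of the Jackson integral of `f` on `[a,b]`. -/
def JacksonSummable (q a b : ℝ) (f : ℝ → ℝ) : Prop :=
  Summable fun k : ℕ => |q ^ k * (b * f (q ^ k * b) - a * f (q ^ k * a))|

open Polynomial Finset Filter Topology

/-- Difference form of `qD q f = f'`, which unlike `qD` also constrains the point `0`. -/
def HasQDeriv (q : ℝ) (f f' : ℝ → ℝ) : Prop :=
  ∀ x, f x - f (q * x) = (1 - q) * x * f' x

section HasQDeriv

variable {q : ℝ} {f g f' g' : ℝ → ℝ}

theorem hasQDeriv_of_qD (hq : q ≠ 1) (h : ∀ x, x ≠ 0 → qD q f x = f' x) : HasQDeriv q f f' := by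
  intro x
  rcases eq_or_ne x 0 with rfl | hx
  · simp
  · rw [← h x hx, qD, mul_div_cancel₀ _ (mul_ne_zero (sub_ne_zero.2 hq.symm) hx)]

theorem HasQDeriv.mul (hf : HasQDeriv q f f') (hg : HasQDeriv q g g') :
    HasQDeriv q (fun x => f x * g x) (fun x => f' x * g (q * x) + f x * g' x) := fun x => by
  linear_combination g (q * x) * hf x + f x * hg x

end HasQDeriv

section qDerivP

variable (q : ℝ)

theorem qDerivP_add (p r : ℝ[X]) : qDerivP q (p + r) = qDerivP q p + qDerivP q r :=
  sum_add_index _ _ _ (fun _ => by simp) fun _ _ _ => by simp [add_mul]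

theorem qDerivP_monomial (n : ℕ) (c : ℝ) :
    qDerivP q (monomial n c) = C (c * ∑ i ∈ range n, q ^ i) * X ^ (n - 1) :=
  sum_monomial_index _ _ (by simp)

theorem coeff_qDerivP (p : ℝ[X]) (k : ℕ) :
    (qDerivP q p).coeff k = p.coeff (k + 1) * ∑ i ∈ range (k + 1), q ^ i := by
  induction p using Polynomial.induction_on' with
  | add p r hp hr => simp [qDerivP_add, hp, hr, add_mul]
  | monomial n c =>
    rw [qDerivP_monomial, coeff_C_mul_X_pow, coeff_monomial]
    rcases n with _ | n
    · simp
    · rcases eq_or_ne k n with rfl | h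
      · simp
      · simp [h, h.symm]

theorem natDegree_qDerivP_le (p : ℝ[X]) : (qDerivP q p).natDegree ≤ p.natDegree - 1 :=
  natDegree_le_iff_coeff_eq_zero.2 fun k hk => by
    rw [coeff_qDerivP, coeff_eq_zero_of_natDegree_lt (by omega), zero_mul]

theorem hasQDeriv_eval_qDerivP (p : ℝ[X]) : HasQDeriv q p.eval (qDerivP q p).eval := by
  intro x
  induction p using Polynomial.induction_on' with
  | add p r hp hr => simp only [qDerivP_add, eval_add]; linear_combination hp + hr
  | monomial n c =>
    rw [qDerivP_monomial]
    rcases n with _ | n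
    · simp
    · simp only [eval_monomial, eval_mul, eval_C, eval_pow, eval_X, Nat.add_sub_cancel]
      linear_combination -c * x ^ (n + 1) * mul_neg_geom_sum q (n + 1)

theorem monic_C_mul_qDerivP {p : ℝ[X]} {n : ℕ} (hp : p.Monic) (hpn : p.natDegree = n)
    (hqn : q ^ n ≠ 1) :
    (C ((1 - q) / (1 - q ^ n)) * qDerivP q p).Monic ∧
      (C ((1 - q) / (1 - q ^ n)) * qDerivP q p).natDegree = n - 1 := by
  have hn : n ≠ 0 := by rintro rfl; exact hqn (pow_zero q)
  have hle : (C ((1 - q) / (1 - q ^ n)) * qDerivP q p).natDegree ≤ n - 1 :=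
    (natDegree_C_mul_le _ _).trans (hpn ▸ natDegree_qDerivP_le q p)
  have hlead : (C ((1 - q) / (1 - q ^ n)) * qDerivP q p).coeff (n - 1) = 1 := by
    rw [coeff_C_mul, coeff_qDerivP, Nat.sub_add_cancel (Nat.one_le_iff_ne_zero.2 hn), ← hpn,
      hp.coeff_natDegree, one_mul, hpn, div_mul_eq_mul_div, mul_neg_geom_sum,
      div_self (sub_ne_zero.2 hqn.symm)]
  exact ⟨monic_of_natDegree_le_of_coeff_eq_one _ hle hlead,
    natDegree_eq_of_le_of_coeff_ne_zero hle (by rw [hlead]; exact one_ne_zero)⟩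

end qDerivP

section Jackson

variable {q a b : ℝ} {f g f' : ℝ → ℝ}

theorem JacksonSummable.summable (hf : JacksonSummable q a b f) :
    Summable fun k : ℕ => q ^ k * (b * f (q ^ k * b) - a * f (q ^ k * a)) :=
  summable_abs_iff.1 hf

theorem JacksonSummable.add (hf : JacksonSummable q a b f) (hg : JacksonSummable q a b g) :
    JacksonSummable q a b fun x => f x + g x :=
  summable_abs_iff.2 <| (hf.summable.add hg.summable).congr fun k => by ring

theorem jackson_const_mul (c : ℝ) : jackson q a b (fun x => c * f x) = c * jackson q a b f := by
  simp only [jackson, ← tsum_mul_left]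
  ring_nf

theorem jackson_add (hf : JacksonSummable q a b f) (hg : JacksonSummable q a b g) :
    jackson q a b (fun x => f x + g x) = jackson q a b f + jackson q a b g := by
  rw [jackson, jackson, jackson, ← mul_add, ← hf.summable.tsum_add hg.summable]
  congr 1
  exact tsum_congr fun k => by ring

theorem jackson_finset_sum {ι : Type*} (s : Finset ι) (F : ι → ℝ → ℝ)
    (hF : ∀ i ∈ s, JacksonSummable q a b (F i)) :
    jackson q a b (fun x => ∑ i ∈ s, F i x) = ∑ i ∈ s, jackson q a b (F i) := by
  simp only [jackson, ← mul_sum, ← Summable.tsum_finsetSum fun i hi => (hF i hi).summable,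
    sum_sub_distrib]

/-- q-analogue of the fundamental theorem of calculus: the Jackson sum telescopes, and its tail
tends to `f 0` by continuity. -/
theorem HasQDeriv.jackson_eq (hq0 : 0 ≤ q) (hq1 : q < 1) (hf : HasQDeriv q f f')
    (hc : ContinuousAt f 0) (hs : JacksonSummable q a b f') :
    jackson q a b f' = f b - f a := by
  have hterm : ∀ k : ℕ, (1 - q) * (q ^ k * (b * f' (q ^ k * b) - a * f' (q ^ k * a))) =
      (f (q ^ k * b) - f (q ^ (k + 1) * b)) - (f (q ^ k * a) - f (q ^ (k + 1) * a)) := by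
    intro k
    rw [pow_succ', mul_assoc q, mul_assoc q, hf (q ^ k * b), hf (q ^ k * a)]
    ring
  have hlim : ∀ c, Tendsto (fun K : ℕ => f (q ^ K * c)) atTop (𝓝 (f 0)) := fun c =>
    hc.tendsto.comp <| by simpa using (tendsto_pow_atTop_nhds_zero_of_lt_one hq0 hq1).mul_const c
  have hsum : HasSum (fun k : ℕ => (1 - q) * (q ^ k * (b * f' (q ^ k * b) - a * f' (q ^ k * a))))
      (f b - f a) := by
    rw [(hs.summable.mul_left (1 - q)).hasSum_iff_tendsto_nat]
    simp only [hterm, sum_sub_distrib, sum_range_sub' fun k => f (q ^ k * b),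
      sum_range_sub' fun k => f (q ^ k * a)]
    simpa using (tendsto_const_nhds.sub (hlim b)).sub (tendsto_const_nhds.sub (hlim a))
  rw [jackson, ← tsum_mul_left, hsum.tsum_eq]

theorem HasQDeriv.jackson_by_parts {g g' : ℝ → ℝ} (hq0 : 0 ≤ q) (hq1 : q < 1)
    (hf : HasQDeriv q f f') (hg : HasQDeriv q g g') (hc : ContinuousAt (fun x => f x * g x) 0)
    (hs₁ : JacksonSummable q a b fun x => f' x * g (q * x))
    (hs₂ : JacksonSummable q a b fun x => f x * g' x) :
    jackson q a b (fun x => f' x * g (q * x)) + jackson q a b (fun x => f x * g' x) =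
      f b * g b - f a * g a := by
  rw [← jackson_add hs₁ hs₂]
  exact (hf.mul hg).jackson_eq hq0 hq1 hc (hs₁.add hs₂)

theorem jackson_orthogonal_of_natDegree_lt {ϱ : ℝ → ℝ} {P p : ℝ[X]} {n : ℕ}
    (hsum : ∀ p : ℝ[X], JacksonSummable q a b fun x => p.eval x * ϱ x)
    (horth : ∀ j, j + 1 ≤ n → jackson q a b (fun x => P.eval x * x ^ j * ϱ x) = 0)
    (hp : p.natDegree < n) :
    jackson q a b (fun x => P.eval x * (ϱ x * p.eval x)) = 0 := by
  have hterm : ∀ i, (fun x => P.eval x * (ϱ x * (p.coeff i * x ^ i))) =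
      fun x => p.coeff i * (P.eval x * x ^ i * ϱ x) := fun i => funext fun x => by ring
  simp only [eval_eq_sum_range' hp, mul_sum]
  rw [jackson_finset_sum _ _ fun i _ => by
    rw [hterm]; convert hsum (C (p.coeff i) * P * X ^ i) using 1; funext x
    simp only [eval_mul, eval_C, eval_pow, eval_X]; ring]
  exact sum_eq_zero fun i hi => by
    rw [hterm, jackson_const_mul, horth i (mem_range.1 hi), mul_zero]

end Jackson

/-- `∂_q(ϱ B ωʲ) = ϱ · pearsonMomentPoly q A B j` under the q-Pearson equation. -/
noncomputable def pearsonMomentPoly (q : ℝ) (A B : ℝ[X]) (j : ℕ) : ℝ[X] :=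
  C (q ^ j) * X ^ j * A + B * qDerivP q (X ^ j)

theorem hasQDeriv_pearson_mul_pow {q : ℝ} {ϱ : ℝ → ℝ} {A B : ℝ[X]}
    (h : HasQDeriv q (fun x => ϱ x * B.eval x) fun x => ϱ x * A.eval x) (j : ℕ) :
    HasQDeriv q (fun x => ϱ x * B.eval x * x ^ j)
      fun x => ϱ x * (pearsonMomentPoly q A B j).eval x := by
  intro x
  have := (h.mul (hasQDeriv_eval_qDerivP q (X ^ j))) x
  simp only [eval_pow, eval_X] at this
  rw [this, pearsonMomentPoly]
  simp only [eval_add, eval_mul, eval_C, eval_pow, eval_X]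
  ring

theorem natDegree_pearsonMomentPoly_le (q : ℝ) {A B : ℝ[X]} (hA : A.natDegree ≤ 1)
    (hB : B.natDegree ≤ 2) (j : ℕ) : (pearsonMomentPoly q A B j).natDegree ≤ j + 1 := by
  rw [pearsonMomentPoly, ← monomial_one_right_eq_X_pow, qDerivP_monomial, one_mul,
    monomial_one_right_eq_X_pow]
  rcases j with _ | j
  · simpa using hA
  · rw [Nat.add_sub_cancel]
    have h₁ := natDegree_C_mul_X_pow_le (q ^ (j + 1)) (j + 1)
    have h₂ := natDegree_C_mul_X_pow_le (∑ i ∈ range (j + 1), q ^ i) j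
    exact (natDegree_add_le _ _).trans
      (max_le (natDegree_mul_le.trans (by omega)) (natDegree_mul_le.trans (by omega)))

theorem stmt_1_general (q a₀ a₁ b₀ b₁ b₂ a b : ℝ) (hq0 : 0 < q) (hq1 : q < 1)
    (A B : Polynomial ℝ)
    (hA : A = Polynomial.C a₁ * Polynomial.X + Polynomial.C a₀)
    (hB : B = Polynomial.C b₂ * Polynomial.X ^ 2 + Polynomial.C b₁ * Polynomial.X
      + Polynomial.C b₀)
    (ϱ : ℝ → ℝ) (hcont : ContinuousAt ϱ 0)
    (hPearson : ∀ ω : ℝ, ω ≠ 0 →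
      qD q (fun x => ϱ x * B.eval x) ω = ϱ ω * A.eval ω)
    (hbdry : ϱ a * B.eval a = 0 ∧ ϱ b * B.eval b = 0)
    (P : ℕ → Polynomial ℝ)
    (hmonic : ∀ n : ℕ, (P n).Monic)
    (hdeg : ∀ n : ℕ, (P n).natDegree = n)
    (hsum : ∀ p : Polynomial ℝ, JacksonSummable q a b (fun ω => p.eval ω * ϱ ω))
    (hsum1 : ∀ p : Polynomial ℝ,
      JacksonSummable q a b (fun ω => p.eval ω * (ϱ (q * ω) * B.eval (q * ω))))
    (horth : ∀ n : ℕ, ∀ j : ℕ, j + 1 ≤ n →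
      jackson q a b (fun ω => (P n).eval ω * ω ^ j * ϱ ω) = 0) :
    ∀ n : ℕ, 1 ≤ n →
      (Polynomial.C ((1 - q) / (1 - q ^ n)) * qDerivP q (P n)).Monic ∧
      (Polynomial.C ((1 - q) / (1 - q ^ n)) * qDerivP q (P n)).natDegree = n - 1 ∧
      (∀ j : ℕ, j + 2 ≤ n →
        jackson q a b
          (fun ω => (qDerivP q (P n)).eval ω * ω ^ j * (ϱ (q * ω) * B.eval (q * ω))) = 0) := by
  intro n hn
  obtain ⟨hmonic', hdeg'⟩ :=
    monic_C_mul_qDerivP q (hmonic n) (hdeg n) (pow_lt_one₀ hq0.le hq1 (by omega)).ne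
  refine ⟨hmonic', hdeg', fun j hj => ?_⟩
  set s := pearsonMomentPoly q A B j
  have hs₁ : JacksonSummable q a b fun x =>
      (qDerivP q (P n)).eval x * (ϱ (q * x) * B.eval (q * x) * (q * x) ^ j) := by
    convert hsum1 (C (q ^ j) * qDerivP q (P n) * X ^ j) using 1
    funext x
    simp only [eval_mul, eval_C, eval_pow, eval_X]
    ring
  have hs₂ : JacksonSummable q a b fun x => (P n).eval x * (ϱ x * s.eval x) := by
    convert hsum (P n * s) using 1
    funext x
    simp only [eval_mul]
    ring
  have horth_s : jackson q a b (fun x => (P n).eval x * (ϱ x * s.eval x)) = 0 :=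
    jackson_orthogonal_of_natDegree_lt hsum (horth n)
      ((natDegree_pearsonMomentPoly_le q (by rw [hA]; compute_degree)
        (by rw [hB]; compute_degree) j).trans_lt (by omega))
  have hparts := (hasQDeriv_eval_qDerivP q (P n)).jackson_by_parts hq0.le hq1
    (hasQDeriv_pearson_mul_pow (hasQDeriv_of_qD hq1.ne hPearson) j) (by fun_prop) hs₁ hs₂
  have hscale : jackson q a b (fun x => (qDerivP q (P n)).eval x *
      (ϱ (q * x) * B.eval (q * x) * (q * x) ^ j)) = q ^ j * jackson q a b
      (fun ω => (qDerivP q (P n)).eval ω * ω ^ j * (ϱ (q * ω) * B.eval (q * ω))) := by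
    rw [← jackson_const_mul]
    congr 1
    funext x
    ring
  rw [hscale, horth_s, hbdry.1, hbdry.2] at hparts
  simp only [zero_mul, mul_zero, sub_zero, add_zero] at hparts
  exact (mul_eq_zero.1 hparts).resolve_left (pow_ne_zero j hq0.ne')

/-- Let `0 < q < 1`, `A(ω) = a₁ω + a₀`, `B(ω) = b₂ω² + b₁ω + b₀`,
`a ≤ 0 ≤ b`, and let `ϱ` be continuous at `0`, satisfy the q-Pearson equation
`∂_q(ϱ·B)(ω) = ϱ(ω)A(ω)` for `ω ≠ 0` and the boundary conditions
`ϱ(a)B(a) = ϱ(b)B(b) = 0`.  Let `(P̃_n)` be monic polynomials of degree `n` with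
`∫_a^b P̃_n(ω) ωʲ ϱ(ω) d_qω = 0` for `0 ≤ j ≤ n−1` (all Jackson integrals being
absolutely convergent).  Then for every `n ≥ 1` the polynomial `(1/[n])·∂_q P̃_n`
is monic of degree `n−1`, and `∫_a^b (∂_q P̃_n)(ω) ωʲ ϱ⁽¹⁾(ω) d_qω = 0` for
`0 ≤ j ≤ n−2`, where `ϱ⁽¹⁾(ω) = ϱ(qω)B(qω)`. -/
theorem stmt_1 (q a₀ a₁ b₀ b₁ b₂ a b : ℝ) (hq0 : 0 < q) (hq1 : q < 1)
    (hab : a ≤ 0 ∧ 0 ≤ b)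
    (A B : Polynomial ℝ)
    (hA : A = Polynomial.C a₁ * Polynomial.X + Polynomial.C a₀)
    (hB : B = Polynomial.C b₂ * Polynomial.X ^ 2 + Polynomial.C b₁ * Polynomial.X
      + Polynomial.C b₀)
    (ϱ : ℝ → ℝ) (hcont : ContinuousAt ϱ 0)
    (hPearson : ∀ ω : ℝ, ω ≠ 0 →
      qD q (fun x => ϱ x * B.eval x) ω = ϱ ω * A.eval ω)
    (hbdry : ϱ a * B.eval a = 0 ∧ ϱ b * B.eval b = 0)
    (P : ℕ → Polynomial ℝ)
    (hmonic : ∀ n : ℕ, (P n).Monic)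
    (hdeg : ∀ n : ℕ, (P n).natDegree = n)
    (hsum : ∀ p : Polynomial ℝ, JacksonSummable q a b (fun ω => p.eval ω * ϱ ω))
    (hsum1 : ∀ p : Polynomial ℝ,
      JacksonSummable q a b (fun ω => p.eval ω * (ϱ (q * ω) * B.eval (q * ω))))
    (horth : ∀ n : ℕ, ∀ j : ℕ, j + 1 ≤ n →
      jackson q a b (fun ω => (P n).eval ω * ω ^ j * ϱ ω) = 0) :
    ∀ n : ℕ, 1 ≤ n →
      (Polynomial.C ((1 - q) / (1 - q ^ n)) * qDerivP q (P n)).Monic ∧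
      (Polynomial.C ((1 - q) / (1 - q ^ n)) * qDerivP q (P n)).natDegree = n - 1 ∧
      (∀ j : ℕ, j + 2 ≤ n →
        jackson q a b
          (fun ω => (qDerivP q (P n)).eval ω * ω ^ j * (ϱ (q * ω) * B.eval (q * ω))) = 0) :=
  stmt_1_general q a₀ a₁ b₀ b₁ b₂ a b hq0 hq1 A B hA hB ϱ hcont hPearson hbdry P hmonic hdeg hsum
    hsum1 horth
end

section
/- Let 0 < q < 1, let A(ω) = a₁ω + a₀, B(ω) = b₂ω² + b₁ω + b₀ be real polynomials, and let ϱ : ℝ → ℝ satisfy the q-Pearson equation ∂_q(ϱ·B)(ω) = ϱ(ω)A(ω) for all ω ≠ 0. Fix n ∈ ℕ and set F₀(ω) := ϱ(ω)·∏_{j=0}^{n−1} B(q^{−j}ω). Then there exist real polynomials R_{k,n}, 0 ≤ k ≤ n, with deg R_{k,n} ≤ k, R_{0,n} ≡ 1, satisfying the recurrence R_{k+1,n}(ω) = A(ω)·R_{k,n}(qω) + B(q^{−(n−1−k)}ω)·(∂_q R_{k,n})(ω) + ((B(q^{−(n−1−k)}ω) − B(ω))/((1−q)ω))·R_{k,n}(qω)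 for 0 ≤ k ≤ n−1, such that for every ω ≠ 0: (∂_q^k F₀)(ω) = ϱ(ω)·(∏_{j=0}^{n−1−k} B(q^{−j}ω))·R_{k,n}(ω) for 0 ≤ k ≤ n−1, and (∂_q^n F₀)(ω) = ϱ(ω)·R_{n,n}(ω). -/
open Polynomial Finset

lemma Polynomial.eval_divX_of_coeff_zero {K : Type*} [Field K] {P : K[X]} (hP : P.coeff 0 = 0)
    {ω : K} (hω : ω ≠ 0) :
    P.divX.eval ω = P.eval ω / ω := by
  have h := congrArg (eval ω) (X_mul_divX_add P)
  rw [hP, eval_add, eval_mul, eval_X, eval_C, add_zero] at h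
  rw [← h, mul_div_cancel_left₀ _ hω]

lemma Polynomial.natDegree_comp_C_mul_X_le {R : Type*} [Semiring R] (P : R[X]) (c : R) :
    (P.comp (C c * X)).natDegree ≤ P.natDegree :=
  natDegree_comp_le.trans <| (Nat.mul_le_mul_left _
    ((natDegree_C_mul_le c X).trans natDegree_X_le)).trans_eq (mul_one _)

section qDerivative

variable {q : ℝ}

lemma qD_eq_iff (hq : q ≠ 1) {f : ℝ → ℝ} {ω y : ℝ} (hω : ω ≠ 0) :
    qD q f ω = y ↔ f (q * ω) = f ω - (1 - q) * ω * y := by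
  have hd : (1 - q) * ω ≠ 0 := mul_ne_zero (sub_ne_zero.2 hq.symm) hω
  rw [qD, div_eq_iff hd]
  constructor <;> intro h <;> linarith

lemma prod_range_succ_inv_pow_mul {M : Type*} [CommMonoid M] (hq : q ≠ 0) (f : ℝ → M)
    (m : ℕ) (ω : ℝ) :
    ∏ j ∈ range (m + 1), f (q⁻¹ ^ j * (q * ω)) = f (q * ω) * ∏ j ∈ range m, f (q⁻¹ ^ j * ω) := by
  rw [prod_range_succ', pow_zero, one_mul, mul_comm]
  congr 1
  refine prod_congr rfl fun j _ => congrArg f ?_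
  rw [pow_succ, mul_assoc, inv_mul_cancel_left₀ hq]

/-- The polynomial `A(ω)R(qω) + (B(cω)R(ω) − B(ω)R(qω))/((1−q)ω)`; the numerator vanishes at
`0`, so `divX` divides it exactly by `ω`. -/
noncomputable def pearsonStep (q : ℝ) (A B : ℝ[X]) (c : ℝ) (R : ℝ[X]) : ℝ[X] :=
  A * R.comp (C q * X)
    + C (1 - q)⁻¹ * (B.comp (C c * X) * R - B * R.comp (C q * X)).divX

/-- `pearsonPoly q A B n k` is `R_{k,n}`. -/
noncomputable def pearsonPoly (q : ℝ) (A B : ℝ[X]) (n : ℕ) : ℕ → ℝ[X]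
  | 0 => 1
  | k + 1 => pearsonStep q A B (q⁻¹ ^ (n - 1 - k)) (pearsonPoly q A B n k)

variable {A B : ℝ[X]}

lemma eval_pearsonStep (c : ℝ) (R : ℝ[X]) {ω : ℝ} (hω : ω ≠ 0) :
    (pearsonStep q A B c R).eval ω = A.eval ω * R.eval (q * ω)
      + (B.eval (c * ω) * R.eval ω - B.eval ω * R.eval (q * ω)) / ((1 - q) * ω) := by
  have h0 : (B.comp (C c * X) * R - B * R.comp (C q * X)).coeff 0 = 0 := by
    simp [coeff_zero_eq_eval_zero]
  rw [pearsonStep, eval_add, eval_mul, eval_mul, eval_C, eval_divX_of_coeff_zero h0 hω]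
  simp only [eval_sub, eval_mul, eval_comp, eval_C, eval_X]
  rw [mul_div_assoc', inv_mul_eq_div, div_div]

lemma eval_pearsonStep_eq_qD (c : ℝ) (R : ℝ[X]) {ω : ℝ} (hω : ω ≠ 0) :
    (pearsonStep q A B c R).eval ω = A.eval ω * R.eval (q * ω)
      + B.eval (c * ω) * qD q (fun x => R.eval x) ω
      + (B.eval (c * ω) - B.eval ω) / ((1 - q) * ω) * R.eval (q * ω) := by
  rw [eval_pearsonStep c R hω, qD]
  ring

lemma natDegree_pearsonStep_le (hA : A.natDegree ≤ 1) (hB : B.natDegree ≤ 2) (c : ℝ)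
    {R : ℝ[X]} {k : ℕ} (hR : R.natDegree ≤ k) :
    (pearsonStep q A B c R).natDegree ≤ k + 1 := by
  have hRq := natDegree_comp_C_mul_X_le R q
  have hBc := natDegree_comp_C_mul_X_le B c
  have hnum : (B.comp (C c * X) * R - B * R.comp (C q * X)).natDegree ≤ k + 2 :=
    (natDegree_sub_le _ _).trans <| max_le
      (natDegree_mul_le.trans (by omega)) (natDegree_mul_le.trans (by omega))
  refine (natDegree_add_le _ _).trans (max_le (natDegree_mul_le.trans (by omega)) ?_)
  refine (natDegree_C_mul_le _ _).trans ?_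
  rw [natDegree_divX_eq_natDegree_tsub_one]
  omega

lemma natDegree_pearsonPoly_le (hA : A.natDegree ≤ 1) (hB : B.natDegree ≤ 2) (n : ℕ) :
    ∀ k, (pearsonPoly q A B n k).natDegree ≤ k
  | 0 => by simp [pearsonPoly]
  | k + 1 => natDegree_pearsonStep_le hA hB _ (natDegree_pearsonPoly_le hA hB n k)

lemma qD_pearson_prod_mul (hq0 : q ≠ 0) (hq1 : q ≠ 1) {ϱ : ℝ → ℝ}
    (hPearson : ∀ ω : ℝ, ω ≠ 0 → qD q (fun x => ϱ x * B.eval x) ω = ϱ ω * A.eval ω)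
    (m : ℕ) (R : ℝ[X]) {G : ℝ → ℝ}
    (hG : ∀ x : ℝ, x ≠ 0 →
      G x = ϱ x * (∏ j ∈ range (m + 1), B.eval (q⁻¹ ^ j * x)) * R.eval x)
    {ω : ℝ} (hω : ω ≠ 0) :
    qD q G ω = ϱ ω * (∏ j ∈ range m, B.eval (q⁻¹ ^ j * ω))
      * (pearsonStep q A B (q⁻¹ ^ m) R).eval ω := by
  have hd : (1 - q) * ω ≠ 0 := mul_ne_zero (sub_ne_zero.2 hq1.symm) hω
  have hshift := (qD_eq_iff hq1 hω).1 (hPearson ω hω)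
  rw [qD, hG ω hω, hG (q * ω) (mul_ne_zero hq0 hω), prod_range_succ,
    prod_range_succ_inv_pow_mul hq0 (fun x => B.eval x), eval_pearsonStep _ R hω]
  generalize ∏ j ∈ range m, B.eval (q⁻¹ ^ j * ω) = P
  field_simp
  linear_combination -P * R.eval (q * ω) * hshift

lemma iterate_qD_eq_pearsonPoly (hq0 : q ≠ 0) (hq1 : q ≠ 1) {ϱ : ℝ → ℝ}
    (hPearson : ∀ ω : ℝ, ω ≠ 0 → qD q (fun x => ϱ x * B.eval x) ω = ϱ ω * A.eval ω)
    {n : ℕ} {F₀ : ℝ → ℝ}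
    (hF₀ : ∀ ω : ℝ, F₀ ω = ϱ ω * ∏ j ∈ range n, B.eval (q⁻¹ ^ j * ω)) :
    ∀ k ≤ n, ∀ ω : ℝ, ω ≠ 0 → (qD q)^[k] F₀ ω =
      ϱ ω * (∏ j ∈ range (n - k), B.eval (q⁻¹ ^ j * ω)) * (pearsonPoly q A B n k).eval ω
  | 0, _, ω, _ => by simp [hF₀, pearsonPoly]
  | k + 1, hk, ω, hω => by
    have hm : n - k = n - 1 - k + 1 := by omega
    rw [Function.iterate_succ_apply', show n - (k + 1) = n - 1 - k by omega]
    refine qD_pearson_prod_mul hq0 hq1 hPearson _ _ (fun x hx => ?_) hω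
    rw [← hm]
    exact iterate_qD_eq_pearsonPoly hq0 hq1 hPearson hF₀ k (by omega) x hx

end qDerivative

/-- Let `0 < q < 1`, `A(ω) = a₁ω + a₀`, `B(ω) = b₂ω² + b₁ω + b₀`, and let
`ϱ` satisfy the q-Pearson equation `∂_q(ϱ·B)(ω) = ϱ(ω)A(ω)` for `ω ≠ 0`.  Fix `n` and set
`F₀(ω) := ϱ(ω)·∏_{j=0}^{n−1} B(q^{−j}ω)`.  Then there exist real polynomials `R_{k,n}`,
`0 ≤ k ≤ n`, with `deg R_{k,n} ≤ k`, `R_{0,n} ≡ 1`, satisfying the recurrence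
`R_{k+1,n}(ω) = A(ω)R_{k,n}(qω) + B(q^{−(n−1−k)}ω)(∂_q R_{k,n})(ω)
  + ((B(q^{−(n−1−k)}ω) − B(ω))/((1−q)ω))·R_{k,n}(qω)` for `0 ≤ k ≤ n−1`, such that for
every `ω ≠ 0`: `(∂_q^k F₀)(ω) = ϱ(ω)·(∏_{j=0}^{n−1−k} B(q^{−j}ω))·R_{k,n}(ω)` for
`0 ≤ k ≤ n−1`, and `(∂_q^n F₀)(ω) = ϱ(ω)·R_{n,n}(ω)`. -/
theorem stmt_2 (q a₀ a₁ b₀ b₁ b₂ : ℝ) (hq0 : 0 < q) (hq1 : q < 1)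
    (A B : Polynomial ℝ)
    (hA : A = Polynomial.C a₁ * Polynomial.X + Polynomial.C a₀)
    (hB : B = Polynomial.C b₂ * Polynomial.X ^ 2 + Polynomial.C b₁ * Polynomial.X
      + Polynomial.C b₀)
    (ϱ : ℝ → ℝ)
    (hPearson : ∀ ω : ℝ, ω ≠ 0 →
      qD q (fun x => ϱ x * B.eval x) ω = ϱ ω * A.eval ω)
    (n : ℕ) (F₀ : ℝ → ℝ)
    (hF₀ : ∀ ω : ℝ, F₀ ω = ϱ ω * ∏ j ∈ Finset.range n, B.eval (q⁻¹ ^ j * ω)) :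
    ∃ R : ℕ → Polynomial ℝ,
      (∀ k : ℕ, k ≤ n → (R k).natDegree ≤ k) ∧
      R 0 = 1 ∧
      (∀ k : ℕ, k + 1 ≤ n → ∀ ω : ℝ, ω ≠ 0 →
        (R (k + 1)).eval ω =
          A.eval ω * (R k).eval (q * ω)
          + B.eval (q⁻¹ ^ (n - 1 - k) * ω) * qD q (fun x => (R k).eval x) ω
          + (B.eval (q⁻¹ ^ (n - 1 - k) * ω) - B.eval ω) / ((1 - q) * ω)
              * (R k).eval (q * ω)) ∧
      (∀ k : ℕ, k < n → ∀ ω : ℝ, ω ≠ 0 →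
        (qD q)^[k] F₀ ω =
          ϱ ω * (∏ j ∈ Finset.range (n - k), B.eval (q⁻¹ ^ j * ω)) * (R k).eval ω) ∧
      (∀ ω : ℝ, ω ≠ 0 → (qD q)^[n] F₀ ω = ϱ ω * (R n).eval ω) := by
  have hAdeg : A.natDegree ≤ 1 := by rw [hA]; compute_degree
  have hBdeg : B.natDegree ≤ 2 := by rw [hB]; compute_degree
  have hiter := iterate_qD_eq_pearsonPoly hq0.ne' hq1.ne hPearson hF₀
  refine ⟨pearsonPoly q A B n, fun k _ => natDegree_pearsonPoly_le hAdeg hBdeg n k, rfl,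
    fun k _ ω hω => eval_pearsonStep_eq_qD _ _ hω,
    fun k hk => hiter k hk.le, fun ω hω => ?_⟩
  simpa using hiter n le_rfl ω hω
end

section
/- Let 0 < q < 1, let A(ω) = a₁ω + a₀, B(ω) = b₂ω² + b₁ω + b₀ be real polynomials, let a ≤ 0 ≤ b, and let ϱ : ℝ → ℝ be continuous at 0, satisfy the q-Pearson equation ∂_q(ϱ·B)(ω) = ϱ(ω)A(ω) for all ω ≠ 0, and satisfy ϱ(a)B(a) = ϱ(b)B(b) = 0. Fix n ∈ ℕ and set F₀(ω) := ϱ(ω)·∏_{j=0}^{n−1} B(q^{−j}ω). Then, assuming all the Jackson integrals involved are absolutely convergent, for every integer k with 0 ≤ k < n one has ∫_a^b ωᵏ·(∂_q^n F₀)(ω) d_qω = 0. Consequently, whenever ϱ(ω) ≠ 0 on the Jackson lattice, the function (1/ϱ(ω))·(∂_q^n F₀)(ω) — which is a polynomial of degree ≤ n — is orthogonal to all powers ωᵏ with k < n with respect to the measure ϱ(ω)d_qω on [a,b] (Rodrigues formula orthogonality). -/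
open Polynomial Filter

private lemma tele_tsum {g : ℕ → ℝ} {L : ℝ}
    (hs : Summable fun k => g k - g (k + 1)) (hL : Tendsto g atTop (nhds L)) :
    ∑' k, (g k - g (k + 1)) = g 0 - L := by
  have h1 := hs.hasSum.tendsto_sum_nat
  have h2 : Tendsto (fun K => ∑ i ∈ Finset.range K, (g i - g (i + 1))) atTop (nhds (g 0 - L)) := by
    simp only [Finset.sum_range_sub' g]
    exact tendsto_const_nhds.sub hL
  exact tendsto_nhds_unique h1 h2

noncomputable def rodStep (q : ℝ) (A B p : Polynomial ℝ) (c : ℝ) : Polynomial ℝ :=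
  p * B.comp (Polynomial.C c * Polynomial.X)
    - (B - Polynomial.C (1 - q) * Polynomial.X * A) * p.comp (Polynomial.C q * Polynomial.X)

private lemma rodStep_eval_zero (q : ℝ) (A B p : Polynomial ℝ) (c : ℝ) :
    (rodStep q A B p c).eval 0 = 0 := by
  simp [rodStep]; ring

private lemma rodStep_eval (q : ℝ) (A B p : Polynomial ℝ) (c ω : ℝ) :
    (rodStep q A B p c).eval ω = ω * (rodStep q A B p c).divX.eval ω := by
  conv_lhs => rw [← Polynomial.divX_mul_X_add (rodStep q A B p c)]
  rw [Polynomial.coeff_zero_eq_eval_zero, rodStep_eval_zero]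
  simp; ring

private lemma rodStep_eval' (q : ℝ) (A B p : Polynomial ℝ) (c ω : ℝ) :
    (rodStep q A B p c).eval ω
      = p.eval ω * B.eval (c * ω) - (B.eval ω - (1 - q) * ω * A.eval ω) * p.eval (q * ω) := by
  simp [rodStep]

noncomputable def rodP (q : ℝ) (A B : Polynomial ℝ) (n : ℕ) : ℕ → Polynomial ℝ
  | 0 => 1
  | m + 1 => Polynomial.C (1 / (1 - q)) * (rodStep q A B (rodP q A B n m) ((q⁻¹) ^ (n - m - 1))).divX

/-- Let `0 < q < 1`, `A(ω) = a₁ω + a₀`, `B(ω) = b₂ω² + b₁ω + b₀`,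
`a ≤ 0 ≤ b`, let `ϱ` be continuous at `0`, satisfy the q-Pearson equation for `ω ≠ 0`
and the boundary conditions `ϱ(a)B(a) = ϱ(b)B(b) = 0`.  Fix `n` and set
`F₀(ω) := ϱ(ω)·∏_{j=0}^{n−1} B(q^{−j}ω)`.  Then (all Jackson integrals involved being
absolutely convergent) for every `k < n` one has `∫_a^b ωᵏ·(∂_q^n F₀)(ω) d_qω = 0`;
consequently, if `ϱ` never vanishes on the Jackson lattice, the function
`(1/ϱ)·(∂_q^n F₀)` is orthogonal to all powers `ωᵏ`, `k < n`, for the measure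
`ϱ(ω)d_qω` on `[a,b]` (Rodrigues formula orthogonality). -/
theorem stmt_3 (q a₀ a₁ b₀ b₁ b₂ a b : ℝ) (hq0 : 0 < q) (hq1 : q < 1)
    (hab : a ≤ 0 ∧ 0 ≤ b)
    (A B : Polynomial ℝ)
    (hA : A = Polynomial.C a₁ * Polynomial.X + Polynomial.C a₀)
    (hB : B = Polynomial.C b₂ * Polynomial.X ^ 2 + Polynomial.C b₁ * Polynomial.X
      + Polynomial.C b₀)
    (ϱ : ℝ → ℝ) (hcont : ContinuousAt ϱ 0)
    (hPearson : ∀ ω : ℝ, ω ≠ 0 →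
      qD q (fun x => ϱ x * B.eval x) ω = ϱ ω * A.eval ω)
    (hbdry : ϱ a * B.eval a = 0 ∧ ϱ b * B.eval b = 0)
    (n : ℕ) (F₀ : ℝ → ℝ)
    (hF₀ : ∀ ω : ℝ, F₀ ω = ϱ ω * ∏ j ∈ Finset.range n, B.eval (q⁻¹ ^ j * ω))
    (hsum : ∀ k m : ℕ, k < n → m ≤ n →
      JacksonSummable q a b (fun ω => ω ^ k * (qD q)^[m] F₀ ω)) :
    (∀ k : ℕ, k < n → jackson q a b (fun ω => ω ^ k * (qD q)^[n] F₀ ω) = 0) ∧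
    ((∀ j : ℕ, ϱ (q ^ j * a) ≠ 0 ∧ ϱ (q ^ j * b) ≠ 0) →
      ∀ k : ℕ, k < n →
        jackson q a b (fun ω => ((qD q)^[n] F₀ ω / ϱ ω) * ω ^ k * ϱ ω) = 0) := by
  obtain ⟨ha, hb⟩ := hab
  obtain ⟨hbdA, hbdB⟩ := hbdry
  rcases Nat.eq_zero_or_pos n with hn0 | hn
  · subst hn0
    exact ⟨fun k hk => absurd hk (by omega), fun _ k hk => absurd hk (by omega)⟩
  have hq1' : (1 : ℝ) - q ≠ 0 := ne_of_gt (by linarith)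
  have hqne : q ≠ 0 := ne_of_gt hq0
  have hFsucc : ∀ m : ℕ, (qD q)^[m + 1] F₀ = qD q ((qD q)^[m] F₀) :=
    fun m => Function.iterate_succ_apply' (qD q) m F₀
  set P : ℕ → Polynomial ℝ := rodP q A B n with hPdef
  set G : ℕ → ℝ → ℝ :=
    fun m ω => (∏ j ∈ Finset.range (n - m), B.eval (q⁻¹ ^ j * ω)) * (P m).eval ω with hGdef
  -- Pearson rearranged
  have hP2 : ∀ ω : ℝ, ω ≠ 0 →
      ϱ (q * ω) * B.eval (q * ω)
        = ϱ ω * B.eval ω - (1 - q) * ω * (ϱ ω * A.eval ω) := by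
    intro ω hω
    have h := hPearson ω hω
    rw [qD, div_eq_iff (mul_ne_zero hq1' hω)] at h
    linear_combination -h
  -- structural identity
  have hstruct : ∀ m : ℕ, m ≤ n → ∀ ω : ℝ, ω ≠ 0 →
      (qD q)^[m] F₀ ω = ϱ ω * G m ω := by
    intro m
    induction m with
    | zero =>
      intro _ ω hω
      simp only [Function.iterate_zero, id_eq, hGdef, hPdef, rodP, Nat.sub_zero,
        Polynomial.eval_one, mul_one]
      exact hF₀ ω
    | succ m ih =>
      intro hm ω hω
      have hm' : m ≤ n := by omega
      have hqω : q * ω ≠ 0 := mul_ne_zero hqne hω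
      rw [hFsucc m]
      simp only [qD]
      rw [ih hm' ω hω, ih hm' (q * ω) hqω]
      obtain ⟨k', hk'⟩ : ∃ k', n - m = k' + 1 := ⟨n - m - 1, by omega⟩
      have hk'' : n - (m + 1) = k' := by omega
      have harg : ∀ j : ℕ, q⁻¹ ^ (j + 1) * (q * ω) = q⁻¹ ^ j * ω := by
        intro j; rw [pow_succ]; field_simp
      have eGω : G m ω = (∏ j ∈ Finset.range k', B.eval (q⁻¹ ^ j * ω))
          * B.eval (q⁻¹ ^ k' * ω) * (P m).eval ω := by
        simp only [hGdef, hk', Finset.prod_range_succ]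
      have eGqω : G m (q * ω) = B.eval (q * ω)
          * ((∏ j ∈ Finset.range k', B.eval (q⁻¹ ^ j * ω)) * (P m).eval (q * ω)) := by
        simp only [hGdef, hk', Finset.prod_range_succ', harg, pow_zero, one_mul]
        ring
      have hpe := hP2 ω hω
      have hd' : (P m).eval ω * B.eval (q⁻¹ ^ k' * ω)
          - (B.eval ω - (1 - q) * ω * A.eval ω) * (P m).eval (q * ω)
          = (1 - q) * ω * ((P (m + 1)).eval ω) := by
        have e1 : (P (m + 1)).eval ω
            = (1 / (1 - q)) * ((rodStep q A B (P m) (q⁻¹ ^ k')).divX.eval ω) := by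
          show (rodP q A B n (m + 1)).eval ω = _
          rw [rodP, show n - m - 1 = k' from by omega]
          simp [hPdef]
        rw [e1, ← rodStep_eval', rodStep_eval]
        field_simp
      have eG1 : G (m + 1) ω = (∏ j ∈ Finset.range k', B.eval (q⁻¹ ^ j * ω))
          * (P (m + 1)).eval ω := by
        simp only [hGdef, hk'']
      rw [div_eq_iff (mul_ne_zero hq1' hω), eGω, eGqω, eG1]
      linear_combination (ϱ ω * (∏ j ∈ Finset.range k', B.eval (q⁻¹ ^ j * ω))) * hd'
        - ((∏ j ∈ Finset.range k', B.eval (q⁻¹ ^ j * ω)) * (P m).eval (q * ω)) * hpe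
  -- vanishing at 0
  have hFzero : (a = 0 ∨ b = 0) → ∀ m : ℕ, (qD q)^[m] F₀ 0 = 0 := by
    intro h0 m
    have hϱB : ϱ 0 * B.eval 0 = 0 := by
      rcases h0 with h0 | h0
      · rwa [h0] at hbdA
      · rwa [h0] at hbdB
    cases m with
    | zero =>
      simp only [Function.iterate_zero, id_eq]
      rw [hF₀]
      simp only [mul_zero, Finset.prod_const, Finset.card_range]
      obtain ⟨n', hn'⟩ : ∃ n', n = n' + 1 := ⟨n - 1, by omega⟩
      rw [hn', pow_succ]
      linear_combination (B.eval 0 ^ n') * hϱB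
    | succ m =>
      rw [hFsucc m]
      simp [qD]
  have hL0 : ∀ m : ℕ, m + 1 ≤ n → (a = 0 ∨ b = 0) → ϱ 0 * G m 0 = 0 := by
    intro m hm h0
    have hϱB : ϱ 0 * B.eval 0 = 0 := by
      rcases h0 with h0 | h0
      · rwa [h0] at hbdA
      · rwa [h0] at hbdB
    obtain ⟨k', hk'⟩ : ∃ k', n - m = k' + 1 := ⟨n - m - 1, by omega⟩
    simp only [hGdef, mul_zero, Finset.prod_const, Finset.card_range, hk', pow_succ]
    linear_combination (B.eval 0 ^ k' * (P m).eval 0) * hϱB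
  -- endpoint vanishing
  have hFbound : ∀ m : ℕ, m + 1 ≤ n → ∀ c : ℝ, c = a ∨ c = b → (qD q)^[m] F₀ c = 0 := by
    intro m hm c hc
    rcases eq_or_ne c 0 with rfl | hc0
    · refine hFzero ?_ m
      rcases hc with h | h
      · exact Or.inl h.symm
      · exact Or.inr h.symm
    · rw [hstruct m (by omega) c hc0]
      obtain ⟨k', hk'⟩ : ∃ k', n - m = k' + 1 := ⟨n - m - 1, by omega⟩
      have hϱB : ϱ c * B.eval c = 0 := by
        rcases hc with rfl | rfl
        exacts [hbdA, hbdB]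
      simp only [hGdef, hk', Finset.prod_range_succ', pow_zero, one_mul]
      linear_combination ((∏ j ∈ Finset.range k', B.eval (q⁻¹ ^ (j + 1) * c)) * (P m).eval c) * hϱB
  -- continuity of G m
  have hGcont : ∀ m : ℕ, Continuous (G m) := by
    intro m
    simp only [hGdef]
    exact (continuous_finset_prod _ fun j _ =>
      B.continuous.comp (continuous_const.mul continuous_id)).mul (P m).continuous
  -- limits along the lattice
  have hlimend : ∀ m : ℕ, m + 1 ≤ n → ∀ c : ℝ, c = a ∨ c = b →
      Tendsto (fun K : ℕ => (qD q)^[m] F₀ (q ^ K * c)) atTop (nhds (ϱ 0 * G m 0)) := by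
    intro m hm c hc
    rcases eq_or_ne c 0 with rfl | hc0
    · have h0 : a = 0 ∨ b = 0 := by
        rcases hc with h | h
        · exact Or.inl h.symm
        · exact Or.inr h.symm
      rw [hL0 m hm h0]
      have hcst : ∀ K : ℕ, (qD q)^[m] F₀ (q ^ K * 0) = 0 := by
        intro K; rw [mul_zero]; exact hFzero h0 m
      exact tendsto_const_nhds.congr fun K => (hcst K).symm
    · have h1 : Tendsto (fun K : ℕ => q ^ K * c) atTop (nhds 0) := by
        simpa using (tendsto_pow_atTop_nhds_zero_of_lt_one hq0.le hq1).mul_const c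
      have h2 : Tendsto (fun K : ℕ => ϱ (q ^ K * c)) atTop (nhds (ϱ 0)) := hcont.tendsto.comp h1
      have h3 : Tendsto (fun K : ℕ => G m (q ^ K * c)) atTop (nhds (G m 0)) :=
        ((hGcont m).tendsto 0).comp h1
      refine (h2.mul h3).congr fun K => ?_
      exact (hstruct m (by omega) _ (mul_ne_zero (pow_ne_zero K hqne) hc0)).symm
  -- telescoping evaluation
  have htel : ∀ (h : ℝ → ℝ) (Lb La : ℝ),
      Summable (fun j : ℕ => q ^ j * (b * qD q h (q ^ j * b) - a * qD q h (q ^ j * a))) →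
      Tendsto (fun K : ℕ => h (q ^ K * b)) atTop (nhds Lb) →
      Tendsto (fun K : ℕ => h (q ^ K * a)) atTop (nhds La) →
      jackson q a b (qD q h) = (h b - h a) - (Lb - La) := by
    intro h Lb La hs hLb hLa
    have hpt : ∀ (c : ℝ) (j : ℕ), (1 - q) * (q ^ j * (c * qD q h (q ^ j * c)))
        = h (q ^ j * c) - h (q ^ (j + 1) * c) := by
      intro c j
      rcases eq_or_ne c 0 with rfl | hc0
      · simp [qD]
      · have hω : q ^ j * c ≠ 0 := mul_ne_zero (pow_ne_zero j hqne) hc0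
        have harg : q * (q ^ j * c) = q ^ (j + 1) * c := by ring
        simp only [qD, harg]
        field_simp
    set g : ℕ → ℝ := fun K => h (q ^ K * b) - h (q ^ K * a) with hg
    have key : ∀ j : ℕ, (1 - q) * (q ^ j * (b * qD q h (q ^ j * b) - a * qD q h (q ^ j * a)))
        = g j - g (j + 1) := by
      intro j
      have h1 := hpt b j
      have h2 := hpt a j
      simp only [hg]
      linear_combination h1 - h2
    have hs2 : Summable fun j => g j - g (j + 1) :=
      (hs.mul_left (1 - q)).congr fun j => key j
    have hL : Tendsto g atTop (nhds (Lb - La)) := hLb.sub hLa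
    rw [jackson, ← tsum_mul_left]
    calc (∑' j : ℕ, (1 - q) * (q ^ j * (b * qD q h (q ^ j * b) - a * qD q h (q ^ j * a))))
        = ∑' j : ℕ, (g j - g (j + 1)) := tsum_congr fun j => key j
      _ = g 0 - (Lb - La) := tele_tsum hs2 hL
      _ = (h b - h a) - (Lb - La) := by simp [hg]
  -- main induction
  have zero : ∀ k m : ℕ, k < n → k ≤ m → m + 1 ≤ n →
      jackson q a b (fun ω => ω ^ k * (qD q)^[m + 1] F₀ ω) = 0 := by
    intro k
    induction k with
    | zero =>
      intro m _ _ hm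
      have heq : (fun ω : ℝ => ω ^ 0 * (qD q)^[m + 1] F₀ ω) = qD q ((qD q)^[m] F₀) := by
        funext ω; rw [pow_zero, one_mul, hFsucc m]
      rw [heq]
      have hS : Summable (fun j : ℕ => q ^ j * (b * qD q ((qD q)^[m] F₀) (q ^ j * b)
          - a * qD q ((qD q)^[m] F₀) (q ^ j * a))) := by
        simpa only [pow_zero, one_mul, hFsucc m] using Summable.of_abs (hsum 0 (m + 1) hn hm)
      rw [htel ((qD q)^[m] F₀) (ϱ 0 * G m 0) (ϱ 0 * G m 0) hS
        (hlimend m hm b (Or.inr rfl)) (hlimend m hm a (Or.inl rfl)),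
        hFbound m hm b (Or.inr rfl), hFbound m hm a (Or.inl rfl)]
      ring
    | succ k ih =>
      intro m hk hkm hm
      obtain ⟨m', rfl⟩ : ∃ m', m = m' + 1 := ⟨m - 1, by omega⟩
      set h : ℝ → ℝ := (qD q)^[m' + 1] F₀ with hh
      set H : ℝ → ℝ := fun ω => ω ^ (k + 1) * h ω with hH
      have hk1n : k + 1 < n := by omega
      have hFb : h b = 0 := hFbound (m' + 1) (by omega) b (Or.inr rfl)
      have hFa : h a = 0 := hFbound (m' + 1) (by omega) a (Or.inl rfl)
      set w : ℕ → ℝ := fun j => q ^ j * (b * ((q ^ j * b) ^ k * h (q ^ j * b))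
        - a * ((q ^ j * a) ^ k * h (q ^ j * a))) with hwdef
      have hwsum : Summable w := Summable.of_abs (hsum k (m' + 1) (by omega) (by omega))
      set v1 : ℕ → ℝ := fun j => q ^ j * (b * ((q ^ j * b) ^ (k + 1) * (qD q)^[m' + 1 + 1] F₀ (q ^ j * b))
        - a * ((q ^ j * a) ^ (k + 1) * (qD q)^[m' + 1 + 1] F₀ (q ^ j * a))) with hv1def
      have hv1sum : Summable v1 := Summable.of_abs (hsum (k + 1) (m' + 1 + 1) hk1n (by omega))
      set v2 : ℕ → ℝ := fun j => q ^ j * (b * ((q ^ j * b) ^ k * h (q * (q ^ j * b)))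
        - a * ((q ^ j * a) ^ k * h (q * (q ^ j * a)))) with hv2def
      have hshift : ∀ j : ℕ, v2 j = (q ^ (k + 1))⁻¹ * w (j + 1) := by
        intro j
        have e : ∀ c : ℝ, q ^ (j + 1) * (c * ((q ^ (j + 1) * c) ^ k * h (q ^ (j + 1) * c)))
            = q ^ (k + 1) * (q ^ j * (c * ((q ^ j * c) ^ k * h (q * (q ^ j * c))))) := by
          intro c
          rw [show q * (q ^ j * c) = q ^ (j + 1) * c from by ring]
          ring
        rw [hv2def, hwdef, eq_inv_mul_iff_mul_eq₀ (pow_ne_zero _ hqne)]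
        simp only []
        linear_combination (e a) - (e b)
      have hv2sum : Summable v2 := by
        rw [funext hshift]
        exact (((summable_nat_add_iff 1).2 hwsum).mul_left _)
      set Ck : ℝ := (1 - q ^ (k + 1)) / (1 - q) with hCkdef
      have hqDpt : ∀ ω : ℝ, ω ≠ 0 →
          qD q H ω = ω ^ (k + 1) * qD q h ω + Ck * (ω ^ k * h (q * ω)) := by
        intro ω hω
        simp only [qD, hH, hCkdef]
        field_simp
        ring
      have hdecomp : ∀ j : ℕ, q ^ j * (b * qD q H (q ^ j * b) - a * qD q H (q ^ j * a))
          = v1 j + Ck * v2 j := by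
        intro j
        have e : ∀ c : ℝ, c ≠ 0 → c * qD q H (q ^ j * c)
            = c * ((q ^ j * c) ^ (k + 1) * (qD q)^[m' + 1 + 1] F₀ (q ^ j * c))
              + Ck * (c * ((q ^ j * c) ^ k * h (q * (q ^ j * c)))) := by
          intro c hc0
          rw [hqDpt _ (mul_ne_zero (pow_ne_zero j hqne) hc0), hFsucc (m' + 1)]
          ring
        rcases eq_or_ne b 0 with rfl | hb0 <;> rcases eq_or_ne a 0 with rfl | ha0
        · simp [hv1def, hv2def]
        · rw [hv1def, hv2def]; simp only []
          have ea := e a ha0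
          linear_combination (-(q ^ j)) * ea
        · rw [hv1def, hv2def]; simp only []
          have eb := e b hb0
          linear_combination (q ^ j) * eb
        · rw [hv1def, hv2def]; simp only []
          have ea := e a ha0
          have eb := e b hb0
          linear_combination (q ^ j) * eb - (q ^ j) * ea
      have hsH : Summable (fun j : ℕ => q ^ j * (b * qD q H (q ^ j * b) - a * qD q H (q ^ j * a))) := by
        rw [funext hdecomp]
        exact hv1sum.add (hv2sum.mul_left Ck)
      have hlimH : ∀ c : ℝ, c = a ∨ c = b →
          Tendsto (fun K : ℕ => H (q ^ K * c)) atTop (nhds 0) := by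
        intro c hc
        have h1' : Tendsto (fun K : ℕ => q ^ K * c) atTop (nhds 0) := by
          simpa using (tendsto_pow_atTop_nhds_zero_of_lt_one hq0.le hq1).mul_const c
        have h1 : Tendsto (fun K : ℕ => (q ^ K * c) ^ (k + 1)) atTop (nhds 0) := by
          have := h1'.pow (k + 1)
          simpa using this
        have h2 := hlimend (m' + 1) (by omega) c hc
        have h3 := h1.mul h2
        rw [zero_mul] at h3
        exact h3.congr fun K => by rw [hH]
      have htelH := htel H 0 0 hsH (hlimH b (Or.inr rfl)) (hlimH a (Or.inl rfl))
      have hHb : H b = 0 := by rw [hH]; simp [hFb]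
      have hHa : H a = 0 := by rw [hH]; simp [hFa]
      have hw0 : w 0 = 0 := by rw [hwdef]; simp [hFb, hFa]
      have hwtsum : ∑' j, w j = 0 := by
        have hIH := ih m' (by omega) (by omega) (by omega)
        rw [jackson] at hIH
        rcases mul_eq_zero.1 hIH with h' | h'
        · exact absurd h' hq1'
        · rw [hwdef]
          exact h'
      have hshift2 : ∑' j, w (j + 1) = 0 := by
        have ht := Summable.tsum_eq_zero_add hwsum
        rw [hwtsum, hw0] at ht
        linarith
      have hexp : jackson q a b (qD q H) = (1 - q) * (∑' j, v1 j)
          + (1 - q) * (Ck * ((q ^ (k + 1))⁻¹ * (∑' j, w (j + 1)))) := by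
        rw [jackson, tsum_congr hdecomp, Summable.tsum_add hv1sum (hv2sum.mul_left Ck), tsum_mul_left,
          show (∑' j, v2 j) = (q ^ (k + 1))⁻¹ * ∑' j, w (j + 1) from by
            rw [funext hshift]; exact tsum_mul_left]
        ring
      rw [hexp, hshift2, hHb, hHa] at htelH
      rw [jackson]
      have hfin : (1 - q) * (∑' j, v1 j) = 0 := by
        simpa using htelH
      rw [hv1def] at hfin
      exact hfin
  obtain ⟨N, rfl⟩ : ∃ N, n = N + 1 := ⟨n - 1, by omega⟩
  have first : ∀ k : ℕ, k < N + 1 → jackson q a b (fun ω => ω ^ k * (qD q)^[N + 1] F₀ ω) = 0 :=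
    fun k hk => zero k N hk (by omega) le_rfl
  refine ⟨first, fun hϱ k hk => ?_⟩
  have key := first k hk
  rw [jackson] at key ⊢
  rw [show (∑' j : ℕ, q ^ j * (b * ((qD q)^[N + 1] F₀ (q ^ j * b) / ϱ (q ^ j * b) * (q ^ j * b) ^ k * ϱ (q ^ j * b)) -
      a * ((qD q)^[N + 1] F₀ (q ^ j * a) / ϱ (q ^ j * a) * (q ^ j * a) ^ k * ϱ (q ^ j * a))))
      = ∑' j : ℕ, q ^ j * (b * ((q ^ j * b) ^ k * (qD q)^[N + 1] F₀ (q ^ j * b)) -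
      a * ((q ^ j * a) ^ k * (qD q)^[N + 1] F₀ (q ^ j * a))) from ?_]
  · exact key
  refine tsum_congr fun j => ?_
  have h1 := (hϱ j).1
  have h2 := (hϱ j).2
  field_simp
end

section
/- Let 0 < q < 1 and let A(ω) = a₁ω + a₀, B(ω) = b₂ω² + b₁ω + b₀ be complex polynomials with b₀ ≠ 0, b₂ ≠ 0, b₂ − (1−q)a₁ ≠ 0. Write B(ω) = b₂(ω−a)(ω−b) with roots a, b ≠ 0, and B(ω) − (1−q)ω·A(ω) = (b₂ − (1−q)a₁)(ω−c)(ω−d) with roots c, d ≠ 0. Then the function ϱ(ω) := (qω/a; q)_∞ · (qω/b; q)_∞ / ((ω/c; q)_∞ · (ω/d; q)_∞), defined at all ω ∈ ℂ where the denominator is nonzero, satisfies the q-Pearson functional equation ϱ(ω)·(B(ω) − (1−q)ω·A(ω)) = B(qω)·ϱ(qω) at every ω where both ϱ(ω) and ϱ(qω) are defined. -/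
/-!
Each factor of `ϱ` obeys the shift rule `(x; q)_∞ = (1 − x)(qx; q)_∞`, so
`ϱ(ω) / ϱ(qω) = (1 − qω/a)(1 − qω/b) / ((1 − ω/c)(1 − ω/d))`. Comparing constant terms of the
two factorisations gives `b₂ab = B(0) = (b₂ − (1−q)a₁)cd`, so `B(qω)` and `B(ω) − (1−q)ωA(ω)` are
this common constant times the numerator and the denominator of that ratio respectively.
-/

/-- The infinite q-Pochhammer symbol `(x; q)_∞ = ∏_{k=0}^∞ (1 − qᵏx)` over `ℂ`. -/
noncomputable def qPoch (q : ℝ) (x : ℂ) : ℂ :=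
  ∏' k : ℕ, (1 - (q : ℂ) ^ k * x)

lemma multipliable_one_sub_pow_mul {q : ℂ} (hq : ‖q‖ < 1) (x : ℂ) :
    Multipliable fun k : ℕ ↦ 1 - q ^ k * x := by
  have hsum : Summable fun k : ℕ ↦ ‖-(q ^ k * x)‖ := by
    simpa using (summable_geometric_of_lt_one (norm_nonneg q) hq).mul_right ‖x‖
  simpa only [← sub_eq_add_neg] using multipliable_one_add_of_summable hsum

lemma qPoch_eq_one_sub_mul_qPoch_mul {q : ℝ} (hq : |q| < 1) (x : ℂ) :
    qPoch q x = (1 - x) * qPoch q (q * x) := by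
  have hm : Multipliable fun k : ℕ ↦ 1 - (q : ℂ) ^ (k + 1) * x := by
    simpa only [pow_succ, mul_assoc] using
      multipliable_one_sub_pow_mul (q := q) (by simpa using hq) (q * x)
  rw [qPoch, tprod_eq_zero_mul' (f := fun k ↦ 1 - (q : ℂ) ^ k * x) hm, qPoch]
  simp only [pow_zero, one_mul, pow_succ, mul_assoc]

lemma mul_sub_mul_sub_eq_mul_one_sub_div_mul_one_sub_div {K : Type*} [Field K] {r s : K}
    (hr : r ≠ 0) (hs : s ≠ 0) (L ω : K) :
    L * (ω - r) * (ω - s) = L * r * s * ((1 - ω / r) * (1 - ω / s)) := by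
  field_simp
  ring

theorem stmt_6_general (q : ℝ) (hq0 : 0 < q) (hq1 : q < 1)
    (a₁ b₂ a b c d : ℂ)
    (A B : ℂ → ℂ)
    (ha : a ≠ 0) (hb : b ≠ 0) (hc : c ≠ 0) (hd : d ≠ 0)
    (hBroots : ∀ ω : ℂ, B ω = b₂ * (ω - a) * (ω - b))
    (hCroots : ∀ ω : ℂ, B ω - (1 - (q : ℂ)) * ω * A ω
      = (b₂ - (1 - (q : ℂ)) * a₁) * (ω - c) * (ω - d))
    (ϱ : ℂ → ℂ)
    (hϱ : ∀ ω : ℂ, ϱ ω =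
      qPoch q ((q : ℂ) * ω / a) * qPoch q ((q : ℂ) * ω / b)
        / (qPoch q (ω / c) * qPoch q (ω / d))) :
    ∀ ω : ℂ, qPoch q (ω / c) * qPoch q (ω / d) ≠ 0 →
      qPoch q ((q : ℂ) * ω / c) * qPoch q ((q : ℂ) * ω / d) ≠ 0 →
      ϱ ω * (B ω - (1 - (q : ℂ)) * ω * A ω) = B ((q : ℂ) * ω) * ϱ ((q : ℂ) * ω) := by
  intro ω hden _
  have hq : |q| < 1 := abs_lt.mpr ⟨by linarith, hq1⟩
  have shift (x : ℂ) := qPoch_eq_one_sub_mul_qPoch_mul hq x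
  have hconst : b₂ * a * b = (b₂ - (1 - (q : ℂ)) * a₁) * c * d := by
    simpa using (hBroots 0).symm.trans (by simpa using hCroots 0)
  have hBq : B (q * ω) = b₂ * a * b * ((1 - q * ω / a) * (1 - q * ω / b)) := by
    rw [hBroots, mul_sub_mul_sub_eq_mul_one_sub_div_mul_one_sub_div ha hb]
  have hC : B ω - (1 - (q : ℂ)) * ω * A ω = b₂ * a * b * ((1 - ω / c) * (1 - ω / d)) := by
    rw [hCroots, mul_sub_mul_sub_eq_mul_one_sub_div_mul_one_sub_div hc hd, hconst]
  rw [shift (ω / c), shift (ω / d)] at hden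
  have hlin : (1 - ω / c) * (1 - ω / d) ≠ 0 := fun h ↦
    hden (by linear_combination qPoch q (q * (ω / c)) * qPoch q (q * (ω / d)) * h)
  have hratio : ϱ ω = (1 - q * ω / a) * (1 - q * ω / b) / ((1 - ω / c) * (1 - ω / d))
      * ϱ (q * ω) := by
    rw [hϱ, hϱ, shift (ω / c), shift (ω / d), shift (q * ω / a), shift (q * ω / b),
      div_mul_div_comm]
    congr 1 <;> ring_nf
  rw [hC, hBq, hratio]
  generalize (1 - ω / c) * (1 - ω / d) = u at hlin ⊢
  field_simp

/-- Let `0 < q < 1` and `A(ω) = a₁ω + a₀`, `B(ω) = b₂ω² + b₁ω + b₀` be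
complex polynomials with `b₀ ≠ 0`, `b₂ ≠ 0`, `b₂ − (1−q)a₁ ≠ 0`.  Write
`B(ω) = b₂(ω−a)(ω−b)` with roots `a, b ≠ 0`, and
`B(ω) − (1−q)ωA(ω) = (b₂ − (1−q)a₁)(ω−c)(ω−d)` with roots `c, d ≠ 0`.  Then
`ϱ(ω) = (qω/a;q)_∞(qω/b;q)_∞ / ((ω/c;q)_∞(ω/d;q)_∞)` satisfies the q-Pearson functional
equation `ϱ(ω)(B(ω) − (1−q)ωA(ω)) = B(qω)ϱ(qω)` wherever both `ϱ(ω)` and `ϱ(qω)`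
are defined (i.e. the denominators are nonzero). -/
theorem stmt_6 (q : ℝ) (hq0 : 0 < q) (hq1 : q < 1)
    (a₀ a₁ b₀ b₁ b₂ a b c d : ℂ)
    (A B : ℂ → ℂ)
    (hA : ∀ ω : ℂ, A ω = a₁ * ω + a₀)
    (hB : ∀ ω : ℂ, B ω = b₂ * ω ^ 2 + b₁ * ω + b₀)
    (hb₀ : b₀ ≠ 0) (hb₂ : b₂ ≠ 0) (hlead : b₂ - (1 - (q : ℂ)) * a₁ ≠ 0)
    (ha : a ≠ 0) (hb : b ≠ 0) (hc : c ≠ 0) (hd : d ≠ 0)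
    (hBroots : ∀ ω : ℂ, B ω = b₂ * (ω - a) * (ω - b))
    (hCroots : ∀ ω : ℂ, B ω - (1 - (q : ℂ)) * ω * A ω
      = (b₂ - (1 - (q : ℂ)) * a₁) * (ω - c) * (ω - d))
    (ϱ : ℂ → ℂ)
    (hϱ : ∀ ω : ℂ, ϱ ω =
      qPoch q ((q : ℂ) * ω / a) * qPoch q ((q : ℂ) * ω / b)
        / (qPoch q (ω / c) * qPoch q (ω / d))) :
    ∀ ω : ℂ, qPoch q (ω / c) * qPoch q (ω / d) ≠ 0 →
      qPoch q ((q : ℂ) * ω / c) * qPoch q ((q : ℂ) * ω / d) ≠ 0 →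
      ϱ ω * (B ω - (1 - (q : ℂ)) * ω * A ω) = B ((q : ℂ) * ω) * ϱ ((q : ℂ) * ω) :=
  stmt_6_general q hq0 hq1 a₁ b₂ a b c d A B ha hb hc hd hBroots hCroots ϱ hϱ
end

section
/- Let 0 < q < 1 and let A(ω) = a₁ω + a₀, B(ω) = b₂ω² + b₁ω be real polynomials with b₀ = 0, b₁ ≠ 0, b₂ ≠ 0, b₁ − (1−q)a₀ = 0, b₂ − (1−q)a₁ ≠ 0, and suppose q·b₁/(b₂ − (1−q)a₁) > 0. Let a = −b₁/b₂ ≠ 0 be the nonzero root of B, and let r ∈ ℝ be defined by q^{−r} = q·b₁/(b₂ − (1−q)a₁). Then the function ϱ(ω) := ω^r · (qω/a; q)_∞ / ((−ω; q)_∞ · (−q·ω^{−1}; q)_∞), defined for real ω > 0, satisfies ϱ(ω)·(B(ω) − (1−q)ω·A(ω)) = B(qω)·ϱ(qω) for all ω > 0. -/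
/-- The infinite q-Pochhammer symbol `(x; q)_∞ = ∏_{k=0}^∞ (1 − qᵏx)` over `ℝ`. -/
noncomputable def qPochR (q x : ℝ) : ℝ :=
  ∏' k : ℕ, (1 - q ^ k * x)

/-!
The weight satisfies the first-order q-difference equation `ϱ(qω)(1 − qω/a) = q^r ω ϱ(ω)`:
each of the three Pochhammer symbols `(x; q)_∞ = (1 − x)(qx; q)_∞` peels off one linear
factor, and `(1 + ω)/(1 + ω⁻¹) = ω`. The Pearson equation is this identity multiplied by
`q b₁ ω`, because `b₁ = (1−q)a₀` and the definition of `r` make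
`B(ω) − (1−q)ωA(ω) = q b₁ q^r ω²`, while `B(qω) = q b₁ ω (1 − qω/a)`.
-/

section QPochhammer

variable {q : ℝ}

lemma summable_neg_geometric_mul (hq : |q| < 1) (x : ℝ) :
    Summable fun k : ℕ => -(q ^ k * x) :=
  ((summable_geometric_of_abs_lt_one hq).mul_right x).neg

lemma multipliable_qPochR (hq : |q| < 1) (x : ℝ) :
    Multipliable fun k : ℕ => 1 - q ^ k * x := by
  simpa only [sub_eq_add_neg] using
    Real.multipliable_one_add_of_summable (summable_neg_geometric_mul hq x)

lemma qPochR_eq_one_sub_mul (hq : |q| < 1) (x : ℝ) :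
    qPochR q x = (1 - x) * qPochR q (q * x) := by
  have hshift : ∀ k : ℕ, 1 - q ^ (k + 1) * x = 1 - q ^ k * (q * x) := fun k => by ring
  have hm : Multipliable fun k : ℕ => 1 - q ^ (k + 1) * x :=
    (multipliable_qPochR hq (q * x)).congr fun k => (hshift k).symm
  have hsplit : ∏' k : ℕ, (1 - q ^ k * x) = (1 - q ^ 0 * x) * ∏' k : ℕ, (1 - q ^ (k + 1) * x) :=
    tprod_eq_zero_mul' hm
  rw [pow_zero, one_mul, tprod_congr hshift] at hsplit
  exact hsplit

lemma qPochR_pos (hq0 : 0 ≤ q) (hq1 : q < 1) {x : ℝ} (hx : x ≤ 0) : 0 < qPochR q x := by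
  have hfactor : ∀ k : ℕ, 0 < 1 - q ^ k * x := fun k => by
    nlinarith [mul_nonpos_of_nonneg_of_nonpos (pow_nonneg hq0 k) hx]
  have hlog : Summable fun k : ℕ => Real.log (1 - q ^ k * x) := by
    simpa only [sub_eq_add_neg] using Real.summable_log_one_add_of_summable
      (summable_neg_geometric_mul (abs_lt.2 ⟨by linarith, hq1⟩) x)
  rw [qPochR, ← Real.rexp_tsum_eq_tprod hfactor hlog]
  exact Real.exp_pos _

end QPochhammer

noncomputable def qWeight (q a r ω : ℝ) : ℝ :=
  ω ^ r * qPochR q (q * ω / a) / (qPochR q (-ω) * qPochR q (-q * ω⁻¹))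

lemma qWeight_mul_left_mul_one_sub {q : ℝ} (hq0 : 0 < q) (hq1 : q < 1) (a r : ℝ) {ω : ℝ}
    (hω : 0 < ω) :
    qWeight q a r (q * ω) * (1 - q * ω / a) = q ^ r * ω * qWeight q a r ω := by
  have hq : |q| < 1 := abs_lt.2 ⟨by linarith, hq1⟩
  have hnum : qPochR q (q * ω / a) = (1 - q * ω / a) * qPochR q (q * (q * ω) / a) := by
    rw [qPochR_eq_one_sub_mul hq (q * ω / a), mul_div_assoc q (q * ω)]
  have hden₁ : qPochR q (-ω) = (1 + ω) * qPochR q (-(q * ω)) := by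
    rw [qPochR_eq_one_sub_mul hq, sub_neg_eq_add, mul_neg]
  have hden₂ : qPochR q (-q * (q * ω)⁻¹) = (1 + ω⁻¹) * qPochR q (-q * ω⁻¹) := by
    rw [show -q * (q * ω)⁻¹ = -ω⁻¹ by field_simp, qPochR_eq_one_sub_mul hq (-ω⁻¹),
      sub_neg_eq_add, mul_neg, neg_mul]
  have hP₁ : 0 < qPochR q (-(q * ω)) := qPochR_pos hq0.le hq1 (by nlinarith)
  have hP₂ : 0 < qPochR q (-q * ω⁻¹) :=
    qPochR_pos hq0.le hq1 (by nlinarith [inv_pos.2 hω])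
  rw [qWeight, qWeight, hnum, hden₁, hden₂, Real.mul_rpow hq0.le hω.le]
  field_simp
  ring

theorem stmt_10_general (q a₀ a₁ b₁ b₂ a r : ℝ) (hq0 : 0 < q) (hq1 : q < 1)
    (A B : ℝ → ℝ)
    (hA : ∀ ω : ℝ, A ω = a₁ * ω + a₀)
    (hB : ∀ ω : ℝ, B ω = b₂ * ω ^ 2 + b₁ * ω)
    (hb₁ : b₁ ≠ 0)
    (hlin : b₁ - (1 - q) * a₀ = 0) (hlead : b₂ - (1 - q) * a₁ ≠ 0)
    (ha : a = -b₁ / b₂)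
    (hr : q ^ (-r) = q * b₁ / (b₂ - (1 - q) * a₁))
    (ϱ : ℝ → ℝ)
    (hϱ : ∀ ω : ℝ, 0 < ω →
      ϱ ω = ω ^ r * qPochR q (q * ω / a) / (qPochR q (-ω) * qPochR q (-q * ω⁻¹))) :
    ∀ ω : ℝ, 0 < ω → ϱ ω * (B ω - (1 - q) * ω * A ω) = B (q * ω) * ϱ (q * ω) := by
  intro ω hω
  have hcoeff : b₂ - (1 - q) * a₁ = q * b₁ * q ^ r := by
    rw [eq_div_iff hlead, Real.rpow_neg hq0.le] at hr
    field_simp [(Real.rpow_pos_of_pos hq0 r).ne'] at hr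
    linarith
  have hlhs : B ω - (1 - q) * ω * A ω = q * b₁ * q ^ r * ω ^ 2 := by
    rw [hB, hA]
    linear_combination ω ^ 2 * hcoeff + ω * hlin
  have hrhs : B (q * ω) = q * b₁ * ω * (1 - q * ω / a) := by
    rw [hB, ha]
    field_simp
    ring
  have hϱ_eq : ∀ ω : ℝ, 0 < ω → ϱ ω = qWeight q a r ω := hϱ
  rw [hϱ_eq ω hω, hϱ_eq (q * ω) (mul_pos hq0 hω), hlhs, hrhs]
  linear_combination (-(q * b₁ * ω)) * qWeight_mul_left_mul_one_sub hq0 hq1 a r hω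

/-- Let `0 < q < 1` and `A(ω) = a₁ω + a₀`, `B(ω) = b₂ω² + b₁ω` with
`b₁ ≠ 0`, `b₂ ≠ 0`, `b₁ − (1−q)a₀ = 0`, `b₂ − (1−q)a₁ ≠ 0`, and
`q·b₁/(b₂−(1−q)a₁) > 0`.  Let `a = −b₁/b₂` be the nonzero root of `B` and let `r`
satisfy `q^{−r} = q·b₁/(b₂−(1−q)a₁)`.  Then
`ϱ(ω) = ω^r·(qω/a;q)_∞/((−ω;q)_∞·(−q·ω⁻¹;q)_∞)` satisfies
`ϱ(ω)(B(ω) − (1−q)ωA(ω)) = B(qω)ϱ(qω)` for all `ω > 0`. -/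
theorem stmt_10 (q a₀ a₁ b₁ b₂ a r : ℝ) (hq0 : 0 < q) (hq1 : q < 1)
    (A B : ℝ → ℝ)
    (hA : ∀ ω : ℝ, A ω = a₁ * ω + a₀)
    (hB : ∀ ω : ℝ, B ω = b₂ * ω ^ 2 + b₁ * ω)
    (hb₁ : b₁ ≠ 0) (hb₂ : b₂ ≠ 0)
    (hlin : b₁ - (1 - q) * a₀ = 0) (hlead : b₂ - (1 - q) * a₁ ≠ 0)
    (hpos : 0 < q * b₁ / (b₂ - (1 - q) * a₁))
    (ha : a = -b₁ / b₂) (ha0 : a ≠ 0)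
    (hr : q ^ (-r) = q * b₁ / (b₂ - (1 - q) * a₁))
    (ϱ : ℝ → ℝ)
    (hϱ : ∀ ω : ℝ, 0 < ω →
      ϱ ω = ω ^ r * qPochR q (q * ω / a) / (qPochR q (-ω) * qPochR q (-q * ω⁻¹))) :
    ∀ ω : ℝ, 0 < ω → ϱ ω * (B ω - (1 - q) * ω * A ω) = B (q * ω) * ϱ (q * ω) :=
  stmt_10_general q a₀ a₁ b₁ b₂ a r hq0 hq1 A B hA hB hb₁ hlin hlead ha hr ϱ hϱ
end

section
/- Let 0 < q < 1, let a < 0 < b be real, let b₂ ≠ 0, and suppose B(ω) = b₂(ω−a)(ω−b) and c, d are the two roots of B(ω) − (1−q)ω·A(ω) (where A(ω) = a₁ω + a₀ and b₂ − (1−q)a₁ ≠ 0, c, d ≠ 0). Let ϱ(ω) = (qω/a; q)_∞ · (qω/b; q)_∞ / ((ω/c; q)_∞ · (ω/d; q)_∞). If either (α) c and d are non-real complex conjugates, or (β) c and d are real with c < a and d > b, then ϱ(qᵏa) > 0 and ϱ(qᵏb) > 0 for every integer k ≥ 0; consequently every weight of the Jackson measure ϱ(ω)d_qω on [a,b] is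 positive, i.e. the mass (1−q)qᵏ·b·ϱ(qᵏb) at the point qᵏb and the mass −(1−q)qᵏ·a·ϱ(qᵏa) at the point qᵏa are positive for all k ≥ 0. -/
open ComplexOrder

/-!
For real `t ∈ [a, b]` every factor `1 − qᵏ⁺¹t/a`, `1 − qᵏ⁺¹t/b` of the numerator of `ϱ(t)` is a
positive real, and a product of positive reals `1 − qᵏx` converges to `exp ∑ log (1 − qᵏx) > 0`.
In case (β) the same holds for the denominator, because `c < a ≤ t ≤ b < d`. In case (α) the
denominator is `(w; q)_∞ · conj (w; q)_∞ = |(w; q)_∞|²` with `w = t/c`, and `(w; q)_∞ ≠ 0` since a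
factor `1 − qᵏt/c` can only vanish when `c = qᵏt` is real. The mass points `qᵏa`, `qᵏb` lie in
`[a, b]`.
-/

section QPochhammer

variable {q : ℝ}

lemma qPoch_ofReal (x : ℝ) :
    qPoch q x = ((∏' k : ℕ, (1 - q ^ k * x) : ℝ) : ℂ) := by
  have := Function.LeftInverse.map_tprod (fun k : ℕ => 1 - q ^ k * x) (g := Complex.ofRealHom)
    (L := .unconditional ℕ)
    Complex.continuous_ofReal Complex.continuous_re Complex.ofReal_re
  simpa [qPoch] using this.symm

lemma qPoch_conj (w : ℂ) :
    qPoch q (starRingEnd ℂ w) = starRingEnd ℂ (qPoch q w) := by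
  rw [qPoch, qPoch, Function.LeftInverse.map_tprod _ Complex.continuous_conj
    Complex.continuous_conj Complex.conj_conj]
  simp

lemma summable_norm_pow_mul (hq0 : 0 < q) (hq1 : q < 1) (w : ℂ) :
    Summable fun k : ℕ => ‖(q : ℂ) ^ k * w‖ := by
  simpa [abs_of_pos hq0] using (summable_geometric_of_lt_one hq0.le hq1).mul_right ‖w‖

lemma qPoch_ne_zero (hq0 : 0 < q) (hq1 : q < 1) {w : ℂ}
    (hw : ∀ k : ℕ, 1 - (q : ℂ) ^ k * w ≠ 0) : qPoch q w ≠ 0 := by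
  simpa [qPoch, sub_eq_add_neg] using
    tprod_one_add_ne_zero_of_summable (f := fun k : ℕ => -((q : ℂ) ^ k * w))
      (by simpa [sub_eq_add_neg] using hw) (by simpa using summable_norm_pow_mul hq0 hq1 w)

lemma qPoch_ofReal_pos (hq0 : 0 < q) (hq1 : q < 1) {x : ℝ} (hx : x < 1) :
    0 < qPoch q x := by
  have hfac (k : ℕ) : 0 < 1 - q ^ k * x := by
    rcases le_or_gt x 0 with h | h
    · nlinarith [pow_pos hq0 k]
    · nlinarith [pow_le_one₀ hq0.le hq1.le (n := k), pow_pos hq0 k]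
  have hlog : Summable fun k : ℕ => Real.log (1 - q ^ k * x) := by
    simpa [sub_eq_add_neg] using Real.summable_log_one_add_of_summable
      ((summable_geometric_of_lt_one hq0.le hq1).mul_right x).neg
  rw [qPoch_ofReal, Complex.zero_lt_real, ← Real.rexp_tsum_eq_tprod hfac hlog]
  exact Real.exp_pos _

lemma qPoch_mul_qPoch_conj_pos (hq0 : 0 < q) (hq1 : q < 1) {w : ℂ}
    (hw : ∀ k : ℕ, 1 - (q : ℂ) ^ k * w ≠ 0) :
    0 < qPoch q w * qPoch q (starRingEnd ℂ w) := by
  rw [qPoch_conj, Complex.mul_conj, Complex.zero_lt_real, Complex.normSq_pos]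
  exact qPoch_ne_zero hq0 hq1 hw

end QPochhammer

lemma one_sub_ofReal_div_ne_zero {c : ℂ} (hc : c.im ≠ 0) (x : ℝ) : 1 - (x : ℂ) / c ≠ 0 := by
  have hc0 : c ≠ 0 := fun h => hc (by simp [h])
  intro h
  rw [sub_eq_zero, eq_div_iff hc0, one_mul] at h
  exact hc (by simp [h])

section Weight

variable {q a b : ℝ} (hq0 : 0 < q) (hq1 : q < 1)
include hq0 hq1

lemma qPoch_mul_div_left_pos (ha : a < 0) {t : ℝ} (hat : a ≤ t) :
    0 < qPoch q ((q : ℂ) * t / a) := by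
  have hlt : q * t / a < 1 := by
    rw [div_lt_one_of_neg ha]
    rcases le_or_gt 0 t with ht | ht <;> nlinarith
  exact_mod_cast qPoch_ofReal_pos hq0 hq1 hlt

lemma qPoch_mul_div_right_pos (hb : 0 < b) {t : ℝ} (htb : t ≤ b) :
    0 < qPoch q ((q : ℂ) * t / b) := by
  have hlt : q * t / b < 1 := by
    rw [div_lt_one hb]
    rcases le_or_gt t 0 with ht | ht <;> nlinarith
  exact_mod_cast qPoch_ofReal_pos hq0 hq1 hlt

lemma qPoch_div_mul_qPoch_div_pos (ha : a < 0) (hb : 0 < b) {c d : ℂ}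
    (hcase : (c.im ≠ 0 ∧ d = starRingEnd ℂ c) ∨
      (c.im = 0 ∧ d.im = 0 ∧ c.re < a ∧ b < d.re))
    {t : ℝ} (hat : a ≤ t) (htb : t ≤ b) :
    0 < qPoch q (t / c) * qPoch q (t / d) := by
  rcases hcase with ⟨hc, rfl⟩ | ⟨hc, hd, hca, hbd⟩
  · have hconj : (t : ℂ) / starRingEnd ℂ c = starRingEnd ℂ (t / c) := by simp
    rw [hconj]
    refine qPoch_mul_qPoch_conj_pos hq0 hq1 fun k => ?_
    simpa [mul_div_assoc] using one_sub_ofReal_div_ne_zero hc (q ^ k * t)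
  · rw [← Complex.re_add_im c, ← Complex.re_add_im d, hc, hd]
    have hc' : t / c.re < 1 := (div_lt_one_of_neg (by linarith)).mpr (by linarith)
    have hd' : t / d.re < 1 := (div_lt_one (by linarith)).mpr (by linarith)
    simpa using mul_pos (qPoch_ofReal_pos hq0 hq1 hc') (qPoch_ofReal_pos hq0 hq1 hd')

lemma qPoch_weight_pos (ha : a < 0) (hb : 0 < b) {c d : ℂ}
    (hcase : (c.im ≠ 0 ∧ d = starRingEnd ℂ c) ∨
      (c.im = 0 ∧ d.im = 0 ∧ c.re < a ∧ b < d.re))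
    {t : ℝ} (hat : a ≤ t) (htb : t ≤ b) :
    0 < qPoch q ((q : ℂ) * t / a) * qPoch q ((q : ℂ) * t / b)
      / (qPoch q (t / c) * qPoch q (t / d)) :=
  div_pos
    (mul_pos (qPoch_mul_div_left_pos hq0 hq1 ha hat) (qPoch_mul_div_right_pos hq0 hq1 hb htb))
    (qPoch_div_mul_qPoch_div_pos hq0 hq1 ha hb hcase hat htb)

end Weight

theorem stmt_12_general (q a b : ℝ) (hq0 : 0 < q) (hq1 : q < 1)
    (ha : a < 0) (hb : 0 < b)
    (c d : ℂ)
    (ϱ : ℂ → ℂ)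
    (hϱ : ∀ ω : ℂ, ϱ ω =
      qPoch q ((q : ℂ) * ω / (a : ℂ)) * qPoch q ((q : ℂ) * ω / (b : ℂ))
        / (qPoch q (ω / c) * qPoch q (ω / d)))
    (hcase : (c.im ≠ 0 ∧ d = starRingEnd ℂ c) ∨
      (c.im = 0 ∧ d.im = 0 ∧ c.re < a ∧ b < d.re)) :
    ∀ k : ℕ,
      0 < ϱ ((q ^ k * a : ℝ) : ℂ) ∧
      0 < ϱ ((q ^ k * b : ℝ) : ℂ) ∧
      0 < (((1 - q) * q ^ k * b : ℝ) : ℂ) * ϱ ((q ^ k * b : ℝ) : ℂ) ∧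
      0 < -((((1 - q) * q ^ k * a : ℝ)) : ℂ) * ϱ ((q ^ k * a : ℝ) : ℂ) := by
  intro k
  have hϱ_pos {t : ℝ} (hat : a ≤ t) (htb : t ≤ b) : 0 < ϱ t := by
    rw [hϱ]
    exact qPoch_weight_pos hq0 hq1 ha hb hcase hat htb
  have hqk : 0 < q ^ k := pow_pos hq0 k
  have hqk1 : q ^ k ≤ 1 := pow_le_one₀ hq0.le hq1.le
  have hϱa : 0 < ϱ ((q ^ k * a : ℝ) : ℂ) := hϱ_pos (by nlinarith) (by nlinarith)
  have hϱb : 0 < ϱ ((q ^ k * b : ℝ) : ℂ) := hϱ_pos (by nlinarith) (by nlinarith)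
  refine ⟨hϱa, hϱb, mul_pos ?_ hϱb, mul_pos ?_ hϱa⟩
  · rw [Complex.zero_lt_real]
    exact mul_pos (mul_pos (sub_pos.mpr hq1) hqk) hb
  · rw [← Complex.ofReal_neg, Complex.zero_lt_real, neg_pos]
    exact mul_neg_of_pos_of_neg (mul_pos (sub_pos.mpr hq1) hqk) ha

/-- Let `0 < q < 1`, `a < 0 < b`, `b₂ ≠ 0`, `B(ω) = b₂(ω−a)(ω−b)`, and
let `c, d` be the two (nonzero) roots of `B(ω) − (1−q)ω(a₁ω+a₀)` (with
`b₂ − (1−q)a₁ ≠ 0`).  Let `ϱ(ω) = (qω/a;q)_∞(qω/b;q)_∞/((ω/c;q)_∞(ω/d;q)_∞)`.  If either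
(α) `c` and `d` are non-real complex conjugates, or (β) `c` and `d` are real with `c < a`
and `d > b`, then `ϱ(qᵏa) > 0` and `ϱ(qᵏb) > 0` for every `k ≥ 0` (positivity in the
partial order of `ℂ`, i.e. the values are real and positive); consequently every weight
of the Jackson measure `ϱ(ω)d_qω` on `[a,b]` is positive: the mass `(1−q)qᵏ·b·ϱ(qᵏb)` at
`qᵏb` and the mass `−(1−q)qᵏ·a·ϱ(qᵏa)` at `qᵏa` are positive for all `k ≥ 0`. -/
theorem stmt_12 (q a b b₂ a₁ a₀ : ℝ) (hq0 : 0 < q) (hq1 : q < 1)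
    (ha : a < 0) (hb : 0 < b) (hb₂ : b₂ ≠ 0)
    (hlead : (b₂ : ℂ) - (1 - (q : ℂ)) * (a₁ : ℂ) ≠ 0)
    (c d : ℂ) (hc0 : c ≠ 0) (hd0 : d ≠ 0)
    (B : ℂ → ℂ)
    (hB : ∀ ω : ℂ, B ω = (b₂ : ℂ) * (ω - (a : ℂ)) * (ω - (b : ℂ)))
    (hroots : ∀ ω : ℂ, B ω - (1 - (q : ℂ)) * ω * ((a₁ : ℂ) * ω + (a₀ : ℂ))
      = ((b₂ : ℂ) - (1 - (q : ℂ)) * (a₁ : ℂ)) * (ω - c) * (ω - d))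
    (ϱ : ℂ → ℂ)
    (hϱ : ∀ ω : ℂ, ϱ ω =
      qPoch q ((q : ℂ) * ω / (a : ℂ)) * qPoch q ((q : ℂ) * ω / (b : ℂ))
        / (qPoch q (ω / c) * qPoch q (ω / d)))
    (hcase : (c.im ≠ 0 ∧ d = starRingEnd ℂ c) ∨
      (c.im = 0 ∧ d.im = 0 ∧ c.re < a ∧ b < d.re)) :
    ∀ k : ℕ,
      0 < ϱ ((q ^ k * a : ℝ) : ℂ) ∧
      0 < ϱ ((q ^ k * b : ℝ) : ℂ) ∧
      0 < (((1 - q) * q ^ k * b : ℝ) : ℂ) * ϱ ((q ^ k * b : ℝ) : ℂ) ∧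
      0 < -((((1 - q) * q ^ k * a : ℝ)) : ℂ) * ϱ ((q ^ k * a : ℝ) : ℂ) :=
  stmt_12_general q a b hq0 hq1 ha hb c d ϱ hϱ hcase
end

section
/- Fix ω ∈ ℂ, a sequence of positive reals (r_n)_{n≥1} and a sequence of reals (d_n)_{n≥0}. Define (P_n)_{n≥0} and (Q_n)_{n≥0} by P₀ = 1, P₁ = (ω − d₀)/√r₁, Q₀ = 0, Q₁ = 1/√r₁, and for n ≥ 1: ω·P_n = √r_n·P_{n−1} + d_n·P_n + √r_{n+1}·P_{n+1}, and the same recurrence for Q. If X := ∑_{n=0}^∞ |P_n|² < ∞ and Y := ∑_{n=0}^∞ |Q_n|² < ∞, then ∑_{k=1}^∞ 1/√r_k ≤ 2·√(X·Y); in particular ∑_{k=1}^∞ 1/√r_k converges. -/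
/-!
Any two solutions of the three-term recurrence have a constant weighted Wronskian
`√r_{k+1} (P_k Q_{k+1} - P_{k+1} Q_k)`, and the initial values make it `1`. Hence
`1/√r_{k+1} ≤ |P_k| |Q_{k+1}| + |P_{k+1}| |Q_k|`, and Cauchy–Schwarz bounds the sum of the
right-hand side by `2 √(X Y)`.
-/

theorem Real.summable_mul_and_tsum_mul_le_sqrt {ι : Type*} {f g : ι → ℝ}
    (hf : Summable fun i => f i ^ 2) (hg : Summable fun i => g i ^ 2) :
    Summable (fun i => f i * g i) ∧
      ∑' i, f i * g i ≤ √((∑' i, f i ^ 2) * ∑' i, g i ^ 2) := by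
  have hfg : Summable fun i => f i * g i := by
    refine ((hf.add hg).div_const 2).of_norm_bounded fun i => ?_
    rw [Real.norm_eq_abs, abs_mul]
    nlinarith [sq_nonneg (|f i| - |g i|), sq_abs (f i), sq_abs (g i)]
  refine ⟨hfg, hfg.tsum_le_of_sum_le fun s => ?_⟩
  calc ∑ i ∈ s, f i * g i ≤ √(∑ i ∈ s, f i ^ 2) * √(∑ i ∈ s, g i ^ 2) :=
        Real.sum_mul_le_sqrt_mul_sqrt s f g
    _ ≤ √(∑' i, f i ^ 2) * √(∑' i, g i ^ 2) := by
        gcongr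
        · exact hf.sum_le_tsum s fun i _ => sq_nonneg _
        · exact hg.sum_le_tsum s fun i _ => sq_nonneg _
    _ = √((∑' i, f i ^ 2) * ∑' i, g i ^ 2) :=
        (Real.sqrt_mul (tsum_nonneg fun i => sq_nonneg _) _).symm

theorem tsum_sq_succ_le {f : ℕ → ℝ} (hf : Summable fun n => f n ^ 2) :
    ∑' n, f (n + 1) ^ 2 ≤ ∑' n, f n ^ 2 :=
  tsum_comp_le_tsum_of_inj hf (fun _ => sq_nonneg _) Nat.succ_injective

theorem summable_and_tsum_cross_succ_le {f g : ℕ → ℝ}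
    (hf : Summable fun n => f n ^ 2) (hg : Summable fun n => g n ^ 2) :
    Summable (fun n => f n * g (n + 1) + f (n + 1) * g n) ∧
      ∑' n, (f n * g (n + 1) + f (n + 1) * g n)
        ≤ 2 * √((∑' n, f n ^ 2) * ∑' n, g n ^ 2) := by
  have hf' : Summable fun n => f (n + 1) ^ 2 := (summable_nat_add_iff 1).mpr hf
  have hg' : Summable fun n => g (n + 1) ^ 2 := (summable_nat_add_iff 1).mpr hg
  obtain ⟨hs₁, hle₁⟩ := Real.summable_mul_and_tsum_mul_le_sqrt hf hg'
  obtain ⟨hs₂, hle₂⟩ := Real.summable_mul_and_tsum_mul_le_sqrt hf' hg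
  have hX : 0 ≤ ∑' n, f n ^ 2 := tsum_nonneg fun n => sq_nonneg _
  have hY : 0 ≤ ∑' n, g n ^ 2 := tsum_nonneg fun n => sq_nonneg _
  refine ⟨hs₁.add hs₂, ?_⟩
  calc ∑' n, (f n * g (n + 1) + f (n + 1) * g n)
      = ∑' n, f n * g (n + 1) + ∑' n, f (n + 1) * g n := hs₁.tsum_add hs₂
    _ ≤ √((∑' n, f n ^ 2) * ∑' n, g (n + 1) ^ 2) + √((∑' n, f (n + 1) ^ 2) * ∑' n, g n ^ 2) :=
        add_le_add hle₁ hle₂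
    _ ≤ √((∑' n, f n ^ 2) * ∑' n, g n ^ 2) + √((∑' n, f n ^ 2) * ∑' n, g n ^ 2) :=
        add_le_add (Real.sqrt_le_sqrt (mul_le_mul_of_nonneg_left (tsum_sq_succ_le hg) hX))
          (Real.sqrt_le_sqrt (mul_le_mul_of_nonneg_right (tsum_sq_succ_le hf) hY))
    _ = 2 * √((∑' n, f n ^ 2) * ∑' n, g n ^ 2) := by ring

section Wronskian

variable {ω : ℂ} {a b P Q : ℕ → ℂ}

def jacobiWronskian (a P Q : ℕ → ℂ) (k : ℕ) : ℂ :=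
  a (k + 1) * (P k * Q (k + 1) - P (k + 1) * Q k)

theorem jacobiWronskian_eq_initial
    (hP : ∀ n : ℕ, 1 ≤ n → ω * P n = a n * P (n - 1) + b n * P n + a (n + 1) * P (n + 1))
    (hQ : ∀ n : ℕ, 1 ≤ n → ω * Q n = a n * Q (n - 1) + b n * Q n + a (n + 1) * Q (n + 1))
    (k : ℕ) : jacobiWronskian a P Q k = jacobiWronskian a P Q 0 := by
  induction k with
  | zero => rfl
  | succ k ih =>
    have eP := hP (k + 1) k.succ_pos
    have eQ := hQ (k + 1) k.succ_pos
    simp only [Nat.add_sub_cancel] at eP eQ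
    rw [← ih]
    unfold jacobiWronskian
    linear_combination Q (k + 1) * eP - P (k + 1) * eQ

end Wronskian

theorem stmt_16_general (ω : ℂ) (r : ℕ → ℝ) (d : ℕ → ℝ)
    (hr : ∀ n : ℕ, 1 ≤ n → 0 < r n)
    (P Q : ℕ → ℂ)
    (hP0 : P 0 = 1)
    (hQ0 : Q 0 = 0) (hQ1 : Q 1 = 1 / (Real.sqrt (r 1) : ℂ))
    (hPrec : ∀ n : ℕ, 1 ≤ n →
      ω * P n = (Real.sqrt (r n) : ℂ) * P (n - 1) + (d n : ℂ) * P n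
        + (Real.sqrt (r (n + 1)) : ℂ) * P (n + 1))
    (hQrec : ∀ n : ℕ, 1 ≤ n →
      ω * Q n = (Real.sqrt (r n) : ℂ) * Q (n - 1) + (d n : ℂ) * Q n
        + (Real.sqrt (r (n + 1)) : ℂ) * Q (n + 1))
    (hPsq : Summable fun n : ℕ => ‖P n‖ ^ 2)
    (hQsq : Summable fun n : ℕ => ‖Q n‖ ^ 2) :
    (Summable fun k : ℕ => 1 / Real.sqrt (r (k + 1))) ∧
    ∑' k : ℕ, 1 / Real.sqrt (r (k + 1))
      ≤ 2 * Real.sqrt ((∑' n : ℕ, ‖P n‖ ^ 2)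
          * (∑' n : ℕ, ‖Q n‖ ^ 2)) := by
  have hsqrt : ∀ k : ℕ, 0 < √(r (k + 1)) := fun k => Real.sqrt_pos.mpr (hr _ k.succ_pos)
  have hW : ∀ k, jacobiWronskian (fun n => (√(r n) : ℂ)) P Q k = 1 := fun k => by
    rw [jacobiWronskian_eq_initial hPrec hQrec, jacobiWronskian, hP0, hQ0, hQ1]
    simp [Complex.ofReal_ne_zero.mpr (hsqrt 0).ne']
  have hbound : ∀ k : ℕ, 1 / √(r (k + 1)) ≤ ‖P k‖ * ‖Q (k + 1)‖ + ‖P (k + 1)‖ * ‖Q k‖ := by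
    intro k
    have hnorm := congrArg norm (hW k)
    rw [jacobiWronskian, norm_mul, Complex.norm_real, Real.norm_of_nonneg (hsqrt k).le,
      norm_one] at hnorm
    rw [div_le_iff₀' (hsqrt k), ← hnorm, ← norm_mul, ← norm_mul]
    exact mul_le_mul_of_nonneg_left (norm_sub_le _ _) (hsqrt k).le
  obtain ⟨hsum, hle⟩ := summable_and_tsum_cross_succ_le hPsq hQsq
  have hsummable := hsum.of_nonneg_of_le (fun k => (one_div_pos.mpr (hsqrt k)).le) hbound
  exact ⟨hsummable, (hsummable.tsum_le_tsum hbound hsum).trans hle⟩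

/-- **Cauchy–Schwarz estimate.** Fix `ω ∈ ℂ`, positive reals `(r_n)_{n≥1}`
and reals `(d_n)_{n≥0}`.  Define `(P_n)` and `(Q_n)` by `P₀ = 1`, `P₁ = (ω − d₀)/√r₁`,
`Q₀ = 0`, `Q₁ = 1/√r₁`, and for `n ≥ 1` the three-term recurrence
`ω·X_n = √r_n·X_{n−1} + d_n·X_n + √r_{n+1}·X_{n+1}` for `X = P, Q`.
If `X = ∑|P_n|² < ∞` and `Y = ∑|Q_n|² < ∞`, then
`∑_{k=1}^∞ 1/√r_k ≤ 2√(X·Y)`; in particular `∑_{k=1}^∞ 1/√r_k` converges. -/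
theorem stmt_16 (ω : ℂ) (r : ℕ → ℝ) (d : ℕ → ℝ)
    (hr : ∀ n : ℕ, 1 ≤ n → 0 < r n)
    (P Q : ℕ → ℂ)
    (hP0 : P 0 = 1) (hP1 : P 1 = (ω - (d 0 : ℂ)) / (Real.sqrt (r 1) : ℂ))
    (hQ0 : Q 0 = 0) (hQ1 : Q 1 = 1 / (Real.sqrt (r 1) : ℂ))
    (hPrec : ∀ n : ℕ, 1 ≤ n →
      ω * P n = (Real.sqrt (r n) : ℂ) * P (n - 1) + (d n : ℂ) * P n
        + (Real.sqrt (r (n + 1)) : ℂ) * P (n + 1))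
    (hQrec : ∀ n : ℕ, 1 ≤ n →
      ω * Q n = (Real.sqrt (r n) : ℂ) * Q (n - 1) + (d n : ℂ) * Q n
        + (Real.sqrt (r (n + 1)) : ℂ) * Q (n + 1))
    (hPsq : Summable fun n : ℕ => ‖P n‖ ^ 2)
    (hQsq : Summable fun n : ℕ => ‖Q n‖ ^ 2) :
    (Summable fun k : ℕ => 1 / Real.sqrt (r (k + 1))) ∧
    ∑' k : ℕ, 1 / Real.sqrt (r (k + 1))
      ≤ 2 * Real.sqrt ((∑' n : ℕ, ‖P n‖ ^ 2)
          * (∑' n : ℕ, ‖Q n‖ ^ 2)) :=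
  stmt_16_general ω r d hr P Q hP0 hQ0 hQ1 hPrec hQrec hPsq hQsq
end
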